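/- arXiv:1907.04251 — 8 statements merged into one kernel-verified Lean document; each statement's English description precedes it below -/
import Mathlib

section
/- (2-approximation for the LP rank-one relaxation.) Let A be an m×n matrix with entries in {0,1} and Ω a set of observed index pairs. Let u* ∈ {0,1}^m, v* ∈ {0,1}^n, and let z*_{ij} ∈ {0,1} be defined for (i,j) ∈ Ω with A_ij = 0 and satisfy z*_{ij} = 1 if and only if u*_i + v*_j = 2. Suppose the LP objective value L = Σ_{(i,j)∈Ω, A_ij=1} (u*_i + v*_j)/2 − Σ_{(i,j)∈Ω, A_ij=0} z*_{ij} satisfies L ≥ Σ_{(i,j)∈Ω, A_ij=1} u_i v_j − Σ_{(i,j)∈Ω, A_ij=0} u_i v_j for every pair of binary vectors u ∈ {0,1}^m, v ∈ {0,1}^n (i.e., L is at least the optimal value of the integer tile-maximization problem). Then the approximation error of (u*, v*) is at most twice optimal: E(u*, v*) ≤ 2 · E(u, v) for every u ∈ {0,1}^m, v ∈ {0,1}^n. -/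
/-- 2-approximation for the LP rank-one relaxation:
If `(u*, v*, z*)` is integral with `z*_ij = 1 ↔ u*_i + v*_j = 2` on the observed zero
entries, and its LP objective value dominates the integer tile objective of every binary
pair `(u,v)`, then the approximation error of `(u*, v*)` is at most twice that of any
binary pair: `E(u*,v*) ≤ 2·E(u,v)`. -/
theorem stmt_3 (m n : ℕ) (A : Fin m → Fin n → ℚ)
    (hA : ∀ i j, A i j = 0 ∨ A i j = 1)
    (Ω : Finset (Fin m × Fin n))
    (ustar : Fin m → ℚ) (hustar : ∀ i, ustar i = 0 ∨ ustar i = 1)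
    (vstar : Fin n → ℚ) (hvstar : ∀ j, vstar j = 0 ∨ vstar j = 1)
    (zstar : Fin m → Fin n → ℚ)
    (hz01 : ∀ p ∈ Ω, A p.1 p.2 = 0 → (zstar p.1 p.2 = 0 ∨ zstar p.1 p.2 = 1))
    (hziff : ∀ p ∈ Ω, A p.1 p.2 = 0 →
      (zstar p.1 p.2 = 1 ↔ ustar p.1 + vstar p.2 = 2))
    (hL : ∀ (u : Fin m → ℚ) (v : Fin n → ℚ),
      (∀ i, u i = 0 ∨ u i = 1) → (∀ j, v j = 0 ∨ v j = 1) →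
      ∑ p ∈ Ω.filter (fun p => A p.1 p.2 = 1), u p.1 * v p.2
          - ∑ p ∈ Ω.filter (fun p => A p.1 p.2 = 0), u p.1 * v p.2
        ≤ ∑ p ∈ Ω.filter (fun p => A p.1 p.2 = 1), (ustar p.1 + vstar p.2) / 2
          - ∑ p ∈ Ω.filter (fun p => A p.1 p.2 = 0), zstar p.1 p.2) :
    ∀ (u : Fin m → ℚ) (v : Fin n → ℚ),
      (∀ i, u i = 0 ∨ u i = 1) → (∀ j, v j = 0 ∨ v j = 1) →
      ∑ p ∈ Ω, (A p.1 p.2 - ustar p.1 * vstar p.2) ^ 2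
        ≤ 2 * ∑ p ∈ Ω, (A p.1 p.2 - u p.1 * v p.2) ^ 2 := by
  intro u v hu hv
  classical
  -- split any sum over Ω into the parts where A = 1 and A = 0
  have hsplit : ∀ f : Fin m × Fin n → ℚ,
      ∑ p ∈ Ω, f p
        = ∑ p ∈ Ω.filter (fun p => A p.1 p.2 = 1), f p
          + ∑ p ∈ Ω.filter (fun p => A p.1 p.2 = 0), f p := by
    intro f
    rw [← Finset.sum_filter_add_sum_filter_not Ω (fun p => A p.1 p.2 = 1) f]
    congr 1
    refine Finset.sum_congr ?_ (fun _ _ => rfl)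
    apply Finset.filter_congr
    intro p hp
    rcases hA p.1 p.2 with h | h <;> simp [h]
  -- pointwise bound on A = 1 entries for (u*, v*)
  have h1star : ∀ p ∈ Ω.filter (fun p => A p.1 p.2 = 1),
      (A p.1 p.2 - ustar p.1 * vstar p.2) ^ 2
        ≤ 2 * (1 - (ustar p.1 + vstar p.2) / 2) := by
    intro p hp
    have hA1 : A p.1 p.2 = 1 := (Finset.mem_filter.mp hp).2
    rcases hustar p.1 with h | h <;> rcases hvstar p.2 with h' | h' <;>
      rw [hA1, h, h'] <;> norm_num
  -- pointwise identity on A = 0 entries for (u*, v*)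
  have h0star : ∀ p ∈ Ω.filter (fun p => A p.1 p.2 = 0),
      (A p.1 p.2 - ustar p.1 * vstar p.2) ^ 2 = zstar p.1 p.2 := by
    intro p hp
    have hp' := Finset.mem_filter.mp hp
    have hA0 : A p.1 p.2 = 0 := hp'.2
    have key : zstar p.1 p.2 = ustar p.1 * vstar p.2 := by
      rcases hustar p.1 with h | h <;> rcases hvstar p.2 with h' | h'
      · rw [h, h', mul_zero]
        rcases hz01 p hp'.1 hA0 with h0 | h1
        · exact h0
        · exact absurd ((hziff p hp'.1 hA0).mp h1) (by rw [h, h']; norm_num)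
      · rw [h, h', zero_mul]
        rcases hz01 p hp'.1 hA0 with h0 | h1
        · exact h0
        · exact absurd ((hziff p hp'.1 hA0).mp h1) (by rw [h, h']; norm_num)
      · rw [h, h', mul_zero]
        rcases hz01 p hp'.1 hA0 with h0 | h1
        · exact h0
        · exact absurd ((hziff p hp'.1 hA0).mp h1) (by rw [h, h']; norm_num)
      · rw [h, h', mul_one]
        exact (hziff p hp'.1 hA0).mpr (by rw [h, h']; norm_num)
    rw [hA0, key]
    rcases hustar p.1 with h | h <;> rcases hvstar p.2 with h' | h' <;>
      rw [h, h'] <;> norm_num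
  -- pointwise identities for generic binary (u, v)
  have h1 : ∀ p ∈ Ω.filter (fun p => A p.1 p.2 = 1),
      (A p.1 p.2 - u p.1 * v p.2) ^ 2 = 1 - u p.1 * v p.2 := by
    intro p hp
    have hA1 : A p.1 p.2 = 1 := (Finset.mem_filter.mp hp).2
    rcases hu p.1 with h | h <;> rcases hv p.2 with h' | h' <;>
      rw [hA1, h, h'] <;> norm_num
  have h0 : ∀ p ∈ Ω.filter (fun p => A p.1 p.2 = 0),
      (A p.1 p.2 - u p.1 * v p.2) ^ 2 = u p.1 * v p.2 := by
    intro p hp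
    have hA0 : A p.1 p.2 = 0 := (Finset.mem_filter.mp hp).2
    rcases hu p.1 with h | h <;> rcases hv p.2 with h' | h' <;>
      rw [hA0, h, h'] <;> norm_num
  have hz0 : (0 : ℚ) ≤ ∑ p ∈ Ω.filter (fun p => A p.1 p.2 = 0), zstar p.1 p.2 := by
    apply Finset.sum_nonneg
    intro p hp
    have hp' := Finset.mem_filter.mp hp
    rcases hz01 p hp'.1 hp'.2 with h | h <;> rw [h] <;> norm_num
  have hL' := hL u v hu hv
  -- assemble
  have hLHS1 : ∑ p ∈ Ω.filter (fun p => A p.1 p.2 = 1),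
      (A p.1 p.2 - ustar p.1 * vstar p.2) ^ 2
      ≤ 2 * ((∑ p ∈ Ω.filter (fun p => A p.1 p.2 = 1), (1 : ℚ))
          - ∑ p ∈ Ω.filter (fun p => A p.1 p.2 = 1), (ustar p.1 + vstar p.2) / 2) := by
    calc ∑ p ∈ Ω.filter (fun p => A p.1 p.2 = 1),
        (A p.1 p.2 - ustar p.1 * vstar p.2) ^ 2
        ≤ ∑ p ∈ Ω.filter (fun p => A p.1 p.2 = 1),
            2 * (1 - (ustar p.1 + vstar p.2) / 2) := Finset.sum_le_sum h1star
      _ = 2 * ((∑ p ∈ Ω.filter (fun p => A p.1 p.2 = 1), (1 : ℚ))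
          - ∑ p ∈ Ω.filter (fun p => A p.1 p.2 = 1), (ustar p.1 + vstar p.2) / 2) := by
          rw [← Finset.mul_sum, Finset.sum_sub_distrib]
  have hLHS0 : ∑ p ∈ Ω.filter (fun p => A p.1 p.2 = 0),
      (A p.1 p.2 - ustar p.1 * vstar p.2) ^ 2
      = ∑ p ∈ Ω.filter (fun p => A p.1 p.2 = 0), zstar p.1 p.2 :=
    Finset.sum_congr rfl h0star
  have hRHS1 : ∑ p ∈ Ω.filter (fun p => A p.1 p.2 = 1),
      (A p.1 p.2 - u p.1 * v p.2) ^ 2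
      = (∑ p ∈ Ω.filter (fun p => A p.1 p.2 = 1), (1 : ℚ))
        - ∑ p ∈ Ω.filter (fun p => A p.1 p.2 = 1), u p.1 * v p.2 := by
    rw [Finset.sum_congr rfl h1, Finset.sum_sub_distrib]
  have hRHS0 : ∑ p ∈ Ω.filter (fun p => A p.1 p.2 = 0),
      (A p.1 p.2 - u p.1 * v p.2) ^ 2
      = ∑ p ∈ Ω.filter (fun p => A p.1 p.2 = 0), u p.1 * v p.2 :=
    Finset.sum_congr rfl h0
  rw [hsplit, hsplit]
  linarith [hLHS1, hLHS0, hRHS1, hRHS0, hL', hz0]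
end

section
/- Let A be an m×n matrix with entries in {0,1} and Ω a set of observed index pairs. For all binary vectors u ∈ {0,1}^m and v ∈ {0,1}^n, the following inequality holds (as rationals): Σ_{(i,j)∈Ω} A_ij − |{(i,j)∈Ω : A_ij=1, u_i+v_j=2}| − (1/2)·|{(i,j)∈Ω : A_ij=1, u_i+v_j=1}| + |{(i,j)∈Ω : A_ij=0, u_i+v_j=2}| ≥ (1/2) Σ_{(i,j)∈Ω} (A_ij − u_i v_j)². -/
/-- For a binary m×n matrix `A` and observed index set `Ω`, for all binary
vectors `u`, `v` (as rationals):
`Σ_{(i,j)∈Ω} A_ij − |{(i,j)∈Ω : A_ij=1, u_i+v_j=2}| − (1/2)·|{(i,j)∈Ω : A_ij=1, u_i+v_j=1}|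
  + |{(i,j)∈Ω : A_ij=0, u_i+v_j=2}| ≥ (1/2) Σ_{(i,j)∈Ω} (A_ij − u_i v_j)²`. -/
theorem stmt_4 (m n : ℕ) (A : Fin m → Fin n → ℚ)
    (hA : ∀ i j, A i j = 0 ∨ A i j = 1)
    (Ω : Finset (Fin m × Fin n))
    (u : Fin m → ℚ) (hu : ∀ i, u i = 0 ∨ u i = 1)
    (v : Fin n → ℚ) (hv : ∀ j, v j = 0 ∨ v j = 1) :
    (∑ p ∈ Ω, A p.1 p.2)
        - ((Ω.filter (fun p => A p.1 p.2 = 1 ∧ u p.1 + v p.2 = 2)).card : ℚ)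
        - (1 / 2) * ((Ω.filter (fun p => A p.1 p.2 = 1 ∧ u p.1 + v p.2 = 1)).card : ℚ)
        + ((Ω.filter (fun p => A p.1 p.2 = 0 ∧ u p.1 + v p.2 = 2)).card : ℚ)
      ≥ (1 / 2) * ∑ p ∈ Ω, (A p.1 p.2 - u p.1 * v p.2) ^ 2 := by
  have hcard : ∀ (P : Fin m × Fin n → Prop) [DecidablePred P],
      ((Ω.filter P).card : ℚ) = ∑ p ∈ Ω, (if P p then (1 : ℚ) else 0) := by
    intro P _
    simp [Finset.sum_boole]
  rw [hcard, hcard, hcard, Finset.mul_sum, ge_iff_le, Finset.mul_sum,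
    ← Finset.sum_sub_distrib, ← Finset.sum_sub_distrib, ← Finset.sum_add_distrib]
  apply Finset.sum_le_sum
  intro p hp
  rcases hA p.1 p.2 with hA' | hA' <;> rcases hu p.1 with hu' | hu' <;>
    rcases hv p.2 with hv' | hv' <;> simp [hA', hu', hv'] <;> norm_num
end

section
/- (Exact recovery when a zero-error tile exists.) Let A be an m×n matrix with entries in {0,1} and Ω a set of observed index pairs. Let u* ∈ {0,1}^m, v* ∈ {0,1}^n, and let z*_{ij} ∈ {0,1} be defined for (i,j) ∈ Ω with A_ij = 0 and satisfy z*_{ij} = 1 if and only if u*_i + v*_j = 2, and suppose Σ_{(i,j)∈Ω, A_ij=1} (u*_i + v*_j)/2 − Σ_{(i,j)∈Ω, A_ij=0} z*_{ij} ≥ Σ_{(i,j)∈Ω, A_ij=1} u_i v_j − Σ_{(i,j)∈Ω, A_ij=0} u_i v_j for every binary u, v. If there exist binary vectors u ∈ {0,1}^m, v ∈ {0,1}^n with A_ij = u_i v_j for all (i,j) ∈ Ω, then also A_ij = u*_i v*_j for all (i,j) ∈ Ω. -/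
/-- Exact recovery when a zero-error tile exists:
With `(u*, v*, z*)` an integral LP optimum (i.e. `z*_ij = 1 ↔ u*_i + v*_j = 2` on
observed zeros, and the LP value dominates the integer tile objective of every binary
pair), if some binary pair `(u,v)` satisfies `A_ij = u_i v_j` on all of `Ω`, then
`A_ij = u*_i v*_j` on all of `Ω` as well. -/
theorem stmt_5 (m n : ℕ) (A : Fin m → Fin n → ℚ)
    (hA : ∀ i j, A i j = 0 ∨ A i j = 1)
    (Ω : Finset (Fin m × Fin n))
    (ustar : Fin m → ℚ) (hustar : ∀ i, ustar i = 0 ∨ ustar i = 1)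
    (vstar : Fin n → ℚ) (hvstar : ∀ j, vstar j = 0 ∨ vstar j = 1)
    (zstar : Fin m → Fin n → ℚ)
    (hz01 : ∀ p ∈ Ω, A p.1 p.2 = 0 → (zstar p.1 p.2 = 0 ∨ zstar p.1 p.2 = 1))
    (hziff : ∀ p ∈ Ω, A p.1 p.2 = 0 →
      (zstar p.1 p.2 = 1 ↔ ustar p.1 + vstar p.2 = 2))
    (hL : ∀ (u : Fin m → ℚ) (v : Fin n → ℚ),
      (∀ i, u i = 0 ∨ u i = 1) → (∀ j, v j = 0 ∨ v j = 1) →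
      ∑ p ∈ Ω.filter (fun p => A p.1 p.2 = 1), u p.1 * v p.2
          - ∑ p ∈ Ω.filter (fun p => A p.1 p.2 = 0), u p.1 * v p.2
        ≤ ∑ p ∈ Ω.filter (fun p => A p.1 p.2 = 1), (ustar p.1 + vstar p.2) / 2
          - ∑ p ∈ Ω.filter (fun p => A p.1 p.2 = 0), zstar p.1 p.2)
    (u : Fin m → ℚ) (hu : ∀ i, u i = 0 ∨ u i = 1)
    (v : Fin n → ℚ) (hv : ∀ j, v j = 0 ∨ v j = 1)
    (hexact : ∀ p ∈ Ω, A p.1 p.2 = u p.1 * v p.2) :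
    ∀ p ∈ Ω, A p.1 p.2 = ustar p.1 * vstar p.2 := by
  set S1 := Ω.filter (fun p => A p.1 p.2 = 1) with hS1
  set S0 := Ω.filter (fun p => A p.1 p.2 = 0) with hS0
  -- value of the exact tile
  have h1 : ∑ p ∈ S1, u p.1 * v p.2 = (S1.card : ℚ) := by
    rw [show (S1.card : ℚ) = ∑ p ∈ S1, (1 : ℚ) by simp]
    refine Finset.sum_congr rfl fun p hp => ?_
    rw [hS1, Finset.mem_filter] at hp
    rw [← hexact p hp.1, hp.2]
  have h0 : ∑ p ∈ S0, u p.1 * v p.2 = 0 := by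
    refine Finset.sum_eq_zero fun p hp => ?_
    rw [hS0, Finset.mem_filter] at hp
    rw [← hexact p hp.1, hp.2]
  have hub : ∀ p ∈ S1, (ustar p.1 + vstar p.2) / 2 ≤ 1 := by
    intro p _
    rcases hustar p.1 with h | h <;> rcases hvstar p.2 with h' | h' <;>
      rw [h, h'] <;> norm_num
  have hznn : ∀ p ∈ S0, 0 ≤ zstar p.1 p.2 := by
    intro p hp
    rw [hS0, Finset.mem_filter] at hp
    rcases hz01 p hp.1 hp.2 with h | h <;> rw [h] <;> norm_num
  have hsum1 : ∑ p ∈ S1, (ustar p.1 + vstar p.2) / 2 ≤ (S1.card : ℚ) := by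
    calc ∑ p ∈ S1, (ustar p.1 + vstar p.2) / 2 ≤ ∑ p ∈ S1, (1 : ℚ) :=
          Finset.sum_le_sum hub
      _ = (S1.card : ℚ) := by simp
  have hsum0 : 0 ≤ ∑ p ∈ S0, zstar p.1 p.2 := Finset.sum_nonneg hznn
  have hLuv := hL u v hu hv
  rw [h1, h0, sub_zero] at hLuv
  -- force equalities
  have heq1 : ∑ p ∈ S1, (ustar p.1 + vstar p.2) / 2 = (S1.card : ℚ) :=
    le_antisymm hsum1 (by linarith)
  have heq0 : ∑ p ∈ S0, zstar p.1 p.2 = 0 :=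
    le_antisymm (by linarith) hsum0
  -- pointwise facts
  have hz_each : ∀ p ∈ S0, zstar p.1 p.2 = 0 :=
    (Finset.sum_eq_zero_iff_of_nonneg hznn).1 heq0
  have h1_each : ∀ p ∈ S1, (ustar p.1 + vstar p.2) / 2 = 1 := by
    have hnn : ∀ p ∈ S1, 0 ≤ 1 - (ustar p.1 + vstar p.2) / 2 := fun p hp =>
      by linarith [hub p hp]
    have hsz : ∑ p ∈ S1, (1 - (ustar p.1 + vstar p.2) / 2) = 0 := by
      rw [Finset.sum_sub_distrib, heq1]; simp
    have := (Finset.sum_eq_zero_iff_of_nonneg hnn).1 hsz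
    intro p hp
    have := this p hp
    linarith
  intro p hp
  rcases hA p.1 p.2 with hA0 | hA1
  · have hpS0 : p ∈ S0 := by rw [hS0, Finset.mem_filter]; exact ⟨hp, hA0⟩
    have hz := hz_each p hpS0
    have hne : ¬ (ustar p.1 + vstar p.2 = 2) := by
      intro h2
      have := (hziff p hp hA0).2 h2
      rw [hz] at this; norm_num at this
    rw [hA0]
    rcases hustar p.1 with h | h <;> rcases hvstar p.2 with h' | h' <;>
      rw [h, h'] <;> norm_num
    exact hne (by rw [h, h']; norm_num)
  · have hpS1 : p ∈ S1 := by rw [hS1, Finset.mem_filter]; exact ⟨hp, hA1⟩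
    have h2 : ustar p.1 + vstar p.2 = 2 := by
      have := h1_each p hpS1; linarith
    have hu1 : ustar p.1 = 1 := by
      rcases hustar p.1 with h | h
      · rcases hvstar p.2 with h' | h' <;> rw [h, h'] at h2 <;> norm_num at h2
      · exact h
    have hv1 : vstar p.2 = 1 := by
      rcases hvstar p.2 with h' | h'
      · rw [h', hu1] at h2; norm_num at h2
      · exact h'
    rw [hA1, hu1, hv1]; norm_num
end

section
/- (Existence of a tile-constant maximizer.) Let T_1, …, T_k be pairwise disjoint subsets of {1,…,m} whose union is {1,…,m}, and let A be the m×m binary block-diagonal matrix determined by the T_l. Then there exist binary vectors u*, v* ∈ {0,1}^m maximizing f over all pairs of binary vectors such that u* is constant on each T_l and v* is constant on each T_l (i.e., for every l, either u*_i = 1 for all i ∈ T_l or u*_i = 0 for all i ∈ T_l, and likewise for v*). -/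
open Finset

section Aux

variable {m k : ℕ}

lemma aux_filter_eq (T : Fin k → Finset (Fin m)) :
    (Finset.univ : Finset (Fin m × Fin m)).filter
        (fun p => ∃ l, p.1 ∈ T l ∧ p.2 ∈ T l)
      = Finset.univ.biUnion (fun l => T l ×ˢ T l) := by
  ext p
  simp [Finset.mem_product]

lemma aux_tile_sum (T : Fin k → Finset (Fin m))
    (hdisj : ∀ l l', l ≠ l' → Disjoint (T l) (T l'))
    (g : Fin m × Fin m → ℚ) :
    ∑ p ∈ (Finset.univ : Finset (Fin m × Fin m)).filter
        (fun p => ∃ l, p.1 ∈ T l ∧ p.2 ∈ T l), g p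
      = ∑ l, ∑ i ∈ T l, ∑ j ∈ T l, g (i, j) := by
  rw [aux_filter_eq, Finset.sum_biUnion]
  · exact Finset.sum_congr rfl fun l _ => Finset.sum_product _ _ _
  · intro l _ l' _ h
    simp only [Function.onFun]
    rw [Finset.disjoint_left]
    rintro ⟨i, j⟩ hp hp'
    simp only [Finset.mem_product] at hp hp'
    exact (Finset.disjoint_left.mp (hdisj l l' h)) hp.1 hp'.1

lemma aux_cover_sum (T : Fin k → Finset (Fin m))
    (hdisj : ∀ l l', l ≠ l' → Disjoint (T l) (T l'))
    (hcover : ∀ i : Fin m, ∃ l, i ∈ T l) (w : Fin m → ℚ) :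
    ∑ i, w i = ∑ l, ∑ i ∈ T l, w i := by
  rw [← Finset.sum_biUnion]
  · congr 1
    ext i
    simpa using hcover i
  · intro l _ l' _ h
    exact hdisj l l' h

lemma aux_improve {k : ℕ} (n a a' b : Fin k → ℚ)
    (h : ∀ l, 0 ≤ (a' l - a l) * (n l / 2 + b l - ∑ l', b l')) :
    (∑ l, (n l * (a l + b l) / 2 + a l * b l) - (∑ l, a l) * (∑ l, b l))
      ≤ ∑ l, (n l * (a' l + b l) / 2 + a' l * b l) - (∑ l, a' l) * (∑ l, b l) := by
  have key : ∑ l, (a' l - a l) * (n l / 2 + b l - ∑ l', b l')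
      = (∑ l, (n l * (a' l + b l) / 2 + a' l * b l) - (∑ l, a' l) * (∑ l, b l))
        - (∑ l, (n l * (a l + b l) / 2 + a l * b l) - (∑ l, a l) * (∑ l, b l)) := by
    have h1 : ∑ l, (a' l - a l) * (n l / 2 + b l - ∑ l', b l')
        = ∑ l, ((n l * (a' l + b l) / 2 + a' l * b l)
            - (n l * (a l + b l) / 2 + a l * b l) - (a' l - a l) * (∑ l', b l')) :=
      Finset.sum_congr rfl fun l _ => by ring
    rw [h1, Finset.sum_sub_distrib, Finset.sum_sub_distrib, ← Finset.sum_mul,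
      Finset.sum_sub_distrib]
    ring
  have h0 : 0 ≤ ∑ l, (a' l - a l) * (n l / 2 + b l - ∑ l', b l') :=
    Finset.sum_nonneg fun l _ => h l
  rw [key] at h0
  linarith

lemma aux_symm {k : ℕ} (n a b : Fin k → ℚ) :
    (∑ l, (n l * (a l + b l) / 2 + a l * b l) - (∑ l, a l) * (∑ l, b l))
      = ∑ l, (n l * (b l + a l) / 2 + b l * a l) - (∑ l, b l) * (∑ l, a l) := by
  rw [mul_comm (∑ l, a l)]
  congr 1
  exact Finset.sum_congr rfl fun l _ => by ring

lemma aux_improve2 {k : ℕ} (n a b b' : Fin k → ℚ)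
    (h : ∀ l, 0 ≤ (b' l - b l) * (n l / 2 + a l - ∑ l', a l')) :
    (∑ l, (n l * (a l + b l) / 2 + a l * b l) - (∑ l, a l) * (∑ l, b l))
      ≤ ∑ l, (n l * (a l + b' l) / 2 + a l * b' l) - (∑ l, a l) * (∑ l, b' l) := by
  rw [aux_symm n a b, aux_symm n a b']
  exact aux_improve n b b' a h

lemma aux_f_eq (T : Fin k → Finset (Fin m))
    (hdisj : ∀ l l', l ≠ l' → Disjoint (T l) (T l'))
    (hcover : ∀ i : Fin m, ∃ l, i ∈ T l) (u v : Fin m → ℚ) :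
    (∑ p ∈ (Finset.univ : Finset (Fin m × Fin m)).filter
          (fun p => ∃ l, p.1 ∈ T l ∧ p.2 ∈ T l), (u p.1 + v p.2) / 2
        - ∑ p ∈ (Finset.univ : Finset (Fin m × Fin m)).filter
          (fun p => ¬ ∃ l, p.1 ∈ T l ∧ p.2 ∈ T l), u p.1 * v p.2)
      = ∑ l, (((T l).card : ℚ) * ((∑ i ∈ T l, u i) + (∑ j ∈ T l, v j)) / 2
            + (∑ i ∈ T l, u i) * (∑ j ∈ T l, v j))
        - (∑ l, ∑ i ∈ T l, u i) * (∑ l, ∑ j ∈ T l, v j) := by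
  have htot : ∑ p : Fin m × Fin m, u p.1 * v p.2 = (∑ i, u i) * (∑ j, v j) := by
    rw [Finset.sum_mul_sum]
    rw [Fintype.sum_prod_type]
  have hin2 : ∑ p ∈ (Finset.univ : Finset (Fin m × Fin m)).filter
        (fun p => ∃ l, p.1 ∈ T l ∧ p.2 ∈ T l), u p.1 * v p.2
      = ∑ l, (∑ i ∈ T l, u i) * (∑ j ∈ T l, v j) := by
    rw [aux_tile_sum T hdisj (fun p => u p.1 * v p.2)]
    exact Finset.sum_congr rfl fun l _ => (Finset.sum_mul_sum _ _ _ _).symm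
  have hin1 : ∑ p ∈ (Finset.univ : Finset (Fin m × Fin m)).filter
        (fun p => ∃ l, p.1 ∈ T l ∧ p.2 ∈ T l), (u p.1 + v p.2) / 2
      = ∑ l, ((T l).card : ℚ) * ((∑ i ∈ T l, u i) + (∑ j ∈ T l, v j)) / 2 := by
    rw [aux_tile_sum T hdisj (fun p => (u p.1 + v p.2) / 2)]
    refine Finset.sum_congr rfl fun l _ => ?_
    have h1 : ∑ i ∈ T l, ∑ j ∈ T l, (u i + v j) / 2
        = ∑ i ∈ T l, (((T l).card : ℚ) * u i + ∑ j ∈ T l, v j) / 2 := by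
      refine Finset.sum_congr rfl fun i _ => ?_
      rw [← Finset.sum_div, Finset.sum_add_distrib, Finset.sum_const, nsmul_eq_mul]
    rw [h1, ← Finset.sum_div, Finset.sum_add_distrib, ← Finset.mul_sum,
      Finset.sum_const, nsmul_eq_mul]
    ring
  have hnot := Finset.sum_filter_add_sum_filter_not (Finset.univ : Finset (Fin m × Fin m))
    (fun p => ∃ l, p.1 ∈ T l ∧ p.2 ∈ T l) (fun p => u p.1 * v p.2)
  rw [hin2, htot, aux_cover_sum T hdisj hcover u, aux_cover_sum T hdisj hcover v] at hnot
  rw [hin1, Finset.sum_add_distrib]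
  linarith

end Aux

/-- Existence of a tile-constant maximizer:
For the block-diagonal matrix determined by pairwise disjoint tiles `T_l` covering
`{1,…,m}`, there is a pair of binary vectors maximizing `f` over all binary pairs which
is constant on each tile (in both coordinates). -/
theorem stmt_8 (m k : ℕ) (T : Fin k → Finset (Fin m))
    (hdisj : ∀ l l', l ≠ l' → Disjoint (T l) (T l'))
    (hcover : ∀ i : Fin m, ∃ l, i ∈ T l)
    (f : (Fin m → ℚ) → (Fin m → ℚ) → ℚ)
    (hf : ∀ u v, f u v =
      ∑ p ∈ (Finset.univ : Finset (Fin m × Fin m)).filter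
          (fun p => ∃ l, p.1 ∈ T l ∧ p.2 ∈ T l), (u p.1 + v p.2) / 2
        - ∑ p ∈ (Finset.univ : Finset (Fin m × Fin m)).filter
          (fun p => ¬ ∃ l, p.1 ∈ T l ∧ p.2 ∈ T l), u p.1 * v p.2) :
    ∃ (ustar vstar : Fin m → ℚ),
      (∀ i, ustar i = 0 ∨ ustar i = 1) ∧ (∀ j, vstar j = 0 ∨ vstar j = 1) ∧
      (∀ (u v : Fin m → ℚ), (∀ i, u i = 0 ∨ u i = 1) → (∀ j, v j = 0 ∨ v j = 1) →
        f u v ≤ f ustar vstar) ∧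
      (∀ l, (∀ i ∈ T l, ustar i = 1) ∨ (∀ i ∈ T l, ustar i = 0)) ∧
      (∀ l, (∀ j ∈ T l, vstar j = 1) ∨ (∀ j ∈ T l, vstar j = 0)) := by
  classical
  -- rewrite f via tile sums
  have hfeq : ∀ u v : Fin m → ℚ, f u v
      = ∑ l, (((T l).card : ℚ) * ((∑ i ∈ T l, u i) + (∑ j ∈ T l, v j)) / 2
            + (∑ i ∈ T l, u i) * (∑ j ∈ T l, v j))
        - (∑ l, ∑ i ∈ T l, u i) * (∑ l, ∑ j ∈ T l, v j) := fun u v => by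
    rw [hf u v]; exact aux_f_eq T hdisj hcover u v
  -- binary maximizer exists
  set toQ : (Fin m → Bool) → Fin m → ℚ := fun s i => if s i then 1 else 0 with htoQ
  obtain ⟨p, hp⟩ := Finite.exists_max
    (fun p : (Fin m → Bool) × (Fin m → Bool) => f (toQ p.1) (toQ p.2))
  set u : Fin m → ℚ := toQ p.1 with hu
  set v : Fin m → ℚ := toQ p.2 with hv
  have hubin : ∀ i, u i = 0 ∨ u i = 1 := fun i => by
    by_cases h : p.1 i <;> simp [hu, htoQ, h]
  have hvbin : ∀ j, v j = 0 ∨ v j = 1 := fun j => by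
    by_cases h : p.2 j <;> simp [hv, htoQ, h]
  have hmax : ∀ (u₀ v₀ : Fin m → ℚ), (∀ i, u₀ i = 0 ∨ u₀ i = 1) →
      (∀ j, v₀ j = 0 ∨ v₀ j = 1) → f u₀ v₀ ≤ f u v := by
    intro u₀ v₀ h₀ h₁
    have e0 : u₀ = toQ (fun i => decide (u₀ i = 1)) := by
      funext i
      rcases h₀ i with h | h <;> simp [htoQ, h]
    have e1 : v₀ = toQ (fun j => decide (v₀ j = 1)) := by
      funext j
      rcases h₁ j with h | h <;> simp [htoQ, h]
    rw [e0, e1]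
    exact hp (fun i => decide (u₀ i = 1), fun j => decide (v₀ j = 1))
  -- tile of an index
  have htile : ∀ l, ∀ i ∈ T l, (hcover i).choose = l := by
    intro l i hi
    by_contra h
    exact (Finset.disjoint_left.mp (hdisj _ _ h)) (hcover i).choose_spec hi
  -- step 1: round u
  set b : Fin k → ℚ := fun l => ∑ j ∈ T l, v j with hb
  set cu : Fin k → ℚ :=
    fun l => if 0 ≤ ((T l).card : ℚ) / 2 + b l - ∑ l', b l' then 1 else 0 with hcu
  set u' : Fin m → ℚ := fun i => cu (hcover i).choose with hu'
  have hu'const : ∀ l, ∀ i ∈ T l, u' i = cu l := by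
    intro l i hi
    simp only [hu']
    rw [htile l i hi]
  have ha' : ∀ l, ∑ i ∈ T l, u' i = ((T l).card : ℚ) * cu l := by
    intro l
    rw [Finset.sum_congr rfl (hu'const l), Finset.sum_const, nsmul_eq_mul]
  have hu'bin : ∀ i, u' i = 0 ∨ u' i = 1 := fun i => by
    simp only [hu', hcu]
    split <;> simp
  have step1 : f u v ≤ f u' v := by
    rw [hfeq u v, hfeq u' v]
    refine aux_improve (fun l => ((T l).card : ℚ)) (fun l => ∑ i ∈ T l, u i)
      (fun l => ∑ i ∈ T l, u' i) b ?_
    intro l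
    have hle : ∑ i ∈ T l, u i ≤ ((T l).card : ℚ) := by
      calc ∑ i ∈ T l, u i ≤ ∑ _i ∈ T l, (1 : ℚ) :=
            Finset.sum_le_sum fun i _ => by rcases hubin i with h | h <;> simp [h]
        _ = ((T l).card : ℚ) := by simp
    have hge : (0 : ℚ) ≤ ∑ i ∈ T l, u i :=
      Finset.sum_nonneg fun i _ => by rcases hubin i with h | h <;> simp [h]
    by_cases hc : 0 ≤ ((T l).card : ℚ) / 2 + b l - ∑ l', b l'
    · have : cu l = 1 := by simp only [hcu]; rw [if_pos hc]
      rw [ha', this]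
      apply mul_nonneg _ hc
      linarith
    · have : cu l = 0 := by simp only [hcu]; rw [if_neg hc]
      rw [ha', this]
      have h1 : ∑ i ∈ T l, u i - 0 ≥ 0 := by linarith
      nlinarith [not_le.mp hc]
  -- step 2: round v
  set a' : Fin k → ℚ := fun l => ∑ i ∈ T l, u' i with ha'def
  set cv : Fin k → ℚ :=
    fun l => if 0 ≤ ((T l).card : ℚ) / 2 + a' l - ∑ l', a' l' then 1 else 0 with hcv
  set v' : Fin m → ℚ := fun j => cv (hcover j).choose with hv'
  have hv'const : ∀ l, ∀ j ∈ T l, v' j = cv l := by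
    intro l j hj
    simp only [hv']
    rw [htile l j hj]
  have hb' : ∀ l, ∑ j ∈ T l, v' j = ((T l).card : ℚ) * cv l := by
    intro l
    rw [Finset.sum_congr rfl (hv'const l), Finset.sum_const, nsmul_eq_mul]
  have hv'bin : ∀ j, v' j = 0 ∨ v' j = 1 := fun j => by
    simp only [hv', hcv]
    split <;> simp
  have step2 : f u' v ≤ f u' v' := by
    rw [hfeq u' v, hfeq u' v']
    refine aux_improve2 (fun l => ((T l).card : ℚ)) a' (fun l => ∑ j ∈ T l, v j)
      (fun l => ∑ j ∈ T l, v' j) ?_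
    intro l
    have hle : ∑ j ∈ T l, v j ≤ ((T l).card : ℚ) := by
      calc ∑ j ∈ T l, v j ≤ ∑ _j ∈ T l, (1 : ℚ) :=
            Finset.sum_le_sum fun j _ => by rcases hvbin j with h | h <;> simp [h]
        _ = ((T l).card : ℚ) := by simp
    have hge : (0 : ℚ) ≤ ∑ j ∈ T l, v j :=
      Finset.sum_nonneg fun j _ => by rcases hvbin j with h | h <;> simp [h]
    by_cases hc : 0 ≤ ((T l).card : ℚ) / 2 + a' l - ∑ l', a' l'
    · have : cv l = 1 := by simp only [hcv]; rw [if_pos hc]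
      rw [hb', this]
      apply mul_nonneg _ hc
      linarith
    · have : cv l = 0 := by simp only [hcv]; rw [if_neg hc]
      rw [hb', this]
      have h1 : ∑ j ∈ T l, v j - 0 ≥ 0 := by linarith
      nlinarith [not_le.mp hc]
  refine ⟨u', v', hu'bin, hv'bin, ?_, ?_, ?_⟩
  · intro u₀ v₀ h₀ h₁
    calc f u₀ v₀ ≤ f u v := hmax u₀ v₀ h₀ h₁
      _ ≤ f u' v := step1
      _ ≤ f u' v' := step2
  · intro l
    by_cases hc : 0 ≤ ((T l).card : ℚ) / 2 + b l - ∑ l', b l'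
    · left
      intro i hi
      rw [hu'const l i hi]
      simp only [hcu]; rw [if_pos hc]
    · right
      intro i hi
      rw [hu'const l i hi]
      simp only [hcu]; rw [if_neg hc]
  · intro l
    by_cases hc : 0 ≤ ((T l).card : ℚ) / 2 + a' l - ∑ l', a' l'
    · left
      intro j hj
      rw [hv'const l j hj]
      simp only [hcv]; rw [if_pos hc]
    · right
      intro j hj
      rw [hv'const l j hj]
      simp only [hcv]; rw [if_neg hc]
end

section
/- (The largest tile is the unique optimal rank-one approximation.) Let T_1, …, T_k (k ≥ 2) be pairwise disjoint subsets of {1,…,m} whose union is {1,…,m}, with n_l = |T_l|, and let A be the m×m binary block-diagonal matrix determined by the T_l. Suppose n_1² > Σ_{l=2}^{k} n_l². Let u¹ = v¹ be the indicator vector of T_1 (u¹_i = 1 iff i ∈ T_1). Then f(u¹, v¹) = n_1², and for every pair of binary vectors (u,v) ∈ {0,1}^m × {0,1}^m with (u,v) ≠ (u¹, v¹) one has f(u,v) < n_1²; i.e., (u¹, v¹) is the unique maximizer of f. -/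
/-- Block sum of a vector over tile `l`. -/
def Ablk {m k : ℕ} (T : Fin k → Finset (Fin m)) (u : Fin m → ℚ) (l : Fin k) : ℚ :=
  ∑ i ∈ T l, u i

open Finset in
lemma sum_partition' {m k : ℕ} (T : Fin k → Finset (Fin m))
    (hdisj : ∀ l l', l ≠ l' → Disjoint (T l) (T l'))
    (hcover : ∀ i : Fin m, ∃ l, i ∈ T l) (g : Fin m → ℚ) :
    ∑ i, g i = ∑ l, ∑ i ∈ T l, g i := by
  have huniv : (univ : Finset (Fin m)) = univ.biUnion T := by
    ext i; simpa using hcover i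
  rw [huniv, Finset.sum_biUnion]
  intro l _ l' _ h
  exact hdisj l l' h

open Finset in
lemma f_formula {m k : ℕ} (T : Fin k → Finset (Fin m))
    (hdisj : ∀ l l', l ≠ l' → Disjoint (T l) (T l'))
    (hcover : ∀ i : Fin m, ∃ l, i ∈ T l) (u v : Fin m → ℚ) :
    ((∑ p ∈ (Finset.univ : Finset (Fin m × Fin m)).filter
          (fun p => ∃ l, p.1 ∈ T l ∧ p.2 ∈ T l), (u p.1 + v p.2) / 2)
        - ∑ p ∈ (Finset.univ : Finset (Fin m × Fin m)).filter
          (fun p => ¬ ∃ l, p.1 ∈ T l ∧ p.2 ∈ T l), u p.1 * v p.2)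
    = ∑ l, ((T l).card : ℚ) * (Ablk T u l + Ablk T v l) / 2
      + ∑ l, Ablk T u l * Ablk T v l
      - (∑ l, Ablk T u l) * (∑ l, Ablk T v l) := by
  have hset : (Finset.univ : Finset (Fin m × Fin m)).filter
      (fun p => ∃ l, p.1 ∈ T l ∧ p.2 ∈ T l) = univ.biUnion (fun l => T l ×ˢ T l) := by
    ext p; simp [Finset.mem_product]
  have hpd : ∀ l ∈ (univ : Finset (Fin k)), ∀ l' ∈ (univ : Finset (Fin k)), l ≠ l' →
      Disjoint (T l ×ˢ T l) (T l' ×ˢ T l') := by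
    intro l _ l' _ h
    rw [Finset.disjoint_left]
    rintro ⟨i, j⟩ hp hp'
    rw [Finset.mem_product] at hp hp'
    exact (Finset.disjoint_left.1 (hdisj l l' h)) hp.1 hp'.1
  have hsum1 : ∀ g : Fin m × Fin m → ℚ,
      ∑ p ∈ (Finset.univ : Finset (Fin m × Fin m)).filter
        (fun p => ∃ l, p.1 ∈ T l ∧ p.2 ∈ T l), g p = ∑ l, ∑ p ∈ T l ×ˢ T l, g p := by
    intro g; rw [hset, Finset.sum_biUnion hpd]
  have hblock1 : ∀ l : Fin k, ∑ p ∈ T l ×ˢ T l, (u p.1 + v p.2) / 2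
      = ((T l).card : ℚ) * (Ablk T u l + Ablk T v l) / 2 := by
    intro l
    rw [Finset.sum_product]
    simp only [Ablk, add_div, Finset.sum_add_distrib, Finset.sum_const, nsmul_eq_mul,
      ← Finset.sum_div, ← Finset.mul_sum]
    ring
  have hblock2 : ∀ l : Fin k, ∑ p ∈ T l ×ˢ T l, u p.1 * v p.2
      = Ablk T u l * Ablk T v l := by
    intro l
    rw [Finset.sum_product, Ablk, Ablk, Finset.sum_mul_sum]
  have htot : ∑ p : Fin m × Fin m, u p.1 * v p.2 = (∑ i, u i) * (∑ j, v j) := by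
    rw [← Finset.univ_product_univ, Finset.sum_product, Finset.sum_mul_sum]
  have hnot : ∑ p ∈ (Finset.univ : Finset (Fin m × Fin m)).filter
      (fun p => ¬ ∃ l, p.1 ∈ T l ∧ p.2 ∈ T l), u p.1 * v p.2
      = (∑ i, u i) * (∑ j, v j) - ∑ l, Ablk T u l * Ablk T v l := by
    have := Finset.sum_filter_add_sum_filter_not (Finset.univ : Finset (Fin m × Fin m))
      (fun p => ∃ l, p.1 ∈ T l ∧ p.2 ∈ T l) (fun p => u p.1 * v p.2)
    rw [hsum1] at this
    simp only [hblock2] at this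
    linarith [htot ▸ this]
  have hu' : ∑ i, u i = ∑ l, Ablk T u l := sum_partition' T hdisj hcover u
  have hv' : ∑ j, v j = ∑ l, Ablk T v l := sum_partition' T hdisj hcover v
  rw [hsum1, hnot, hu', hv']
  simp only [hblock1]
  ring

lemma helper_ineq (n B s Q N : ℚ) (hB0 : 0 ≤ B) (hBn : B ≤ n) (hs : 0 ≤ s)
    (hQ1 : Q ≤ N) (hQ2 : Q ≤ n * s) (hN : N < n^2) (hn : 0 < n) :
    0 ≤ (n - B)*n + 2*s*B - Q ∧ ((0 < s ∨ B < n) → 0 < (n - B)*n + 2*s*B - Q) := by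
  rcases le_or_gt n (2*s) with h|h
  · have hs' : 0 < (n-B)*n + 2*s*B - Q := by
      nlinarith [mul_nonneg hB0 (by linarith : (0:ℚ) ≤ 2*s - n)]
    exact ⟨le_of_lt hs', fun _ => hs'⟩
  · have h0 : 0 ≤ (n-B)*n + 2*s*B - Q := by
      nlinarith [mul_nonneg (by linarith : (0:ℚ) ≤ n - B) (by linarith : (0:ℚ) ≤ n - 2*s),
        mul_nonneg hs hn.le]
    refine ⟨h0, ?_⟩
    rintro (hs1|hB)
    · nlinarith [mul_nonneg (by linarith : (0:ℚ) ≤ n - B) (by linarith : (0:ℚ) ≤ n - 2*s)]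
    · nlinarith [mul_pos (by linarith : (0:ℚ) < n - B) (by linarith : (0:ℚ) < n - 2*s),
        mul_nonneg hs hn.le]

open Finset in
lemma ablk_nonneg {m k : ℕ} (T : Fin k → Finset (Fin m)) (u : Fin m → ℚ)
    (hu : ∀ i, u i = 0 ∨ u i = 1) (l : Fin k) : 0 ≤ Ablk T u l :=
  Finset.sum_nonneg fun i _ => by rcases hu i with h|h <;> rw [h] <;> norm_num

open Finset in
lemma ablk_le {m k : ℕ} (T : Fin k → Finset (Fin m)) (u : Fin m → ℚ)
    (hu : ∀ i, u i = 0 ∨ u i = 1) (l : Fin k) : Ablk T u l ≤ ((T l).card : ℚ) := by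
  calc Ablk T u l ≤ ∑ _i ∈ T l, (1:ℚ) :=
        Finset.sum_le_sum fun i _ => by rcases hu i with h|h <;> rw [h] <;> norm_num
    _ = ((T l).card : ℚ) := by simp

/-- The largest tile is the unique optimal rank-one approximation:
If `n_1² > Σ_{l=2}^k n_l²` then, with `u¹ = v¹` the indicator vector of `T_1`,
`f(u¹,v¹) = n_1²` and every other binary pair `(u,v)` has `f(u,v) < n_1²`. -/
theorem stmt_9 (m k : ℕ) (hk : 2 ≤ k) (T : Fin k → Finset (Fin m))
    (hdisj : ∀ l l', l ≠ l' → Disjoint (T l) (T l'))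
    (hcover : ∀ i : Fin m, ∃ l, i ∈ T l)
    (f : (Fin m → ℚ) → (Fin m → ℚ) → ℚ)
    (hf : ∀ u v, f u v =
      ∑ p ∈ (Finset.univ : Finset (Fin m × Fin m)).filter
          (fun p => ∃ l, p.1 ∈ T l ∧ p.2 ∈ T l), (u p.1 + v p.2) / 2
        - ∑ p ∈ (Finset.univ : Finset (Fin m × Fin m)).filter
          (fun p => ¬ ∃ l, p.1 ∈ T l ∧ p.2 ∈ T l), u p.1 * v p.2)
    (t1 : Fin k) (ht1 : t1 = ⟨0, by omega⟩)
    (hdom : ((T t1).card : ℚ) ^ 2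
      > ∑ l ∈ Finset.univ.erase t1, ((T l).card : ℚ) ^ 2)
    (u1 : Fin m → ℚ) (hu1 : ∀ i, u1 i = if i ∈ T t1 then 1 else 0) :
    f u1 u1 = ((T t1).card : ℚ) ^ 2
      ∧ ∀ (u v : Fin m → ℚ), (∀ i, u i = 0 ∨ u i = 1) → (∀ j, v j = 0 ∨ v j = 1) →
          (u, v) ≠ (u1, u1) → f u v < ((T t1).card : ℚ) ^ 2 := by
  have hN0 : (0:ℚ) ≤ ∑ l ∈ Finset.univ.erase t1, ((T l).card : ℚ) ^ 2 :=
    Finset.sum_nonneg fun l _ => sq_nonneg _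
  have hn1 : (0:ℚ) < ((T t1).card : ℚ) := by
    nlinarith [hdom, hN0, Nat.cast_nonneg (α := ℚ) (T t1).card]
  -- block sums of u1
  have hA1 : Ablk T u1 t1 = ((T t1).card : ℚ) := by
    rw [Ablk, Finset.sum_congr rfl (fun i hi => by rw [hu1 i, if_pos hi])]
    simp
  have hA0 : ∀ l, l ≠ t1 → Ablk T u1 l = 0 := by
    intro l hl
    refine Finset.sum_eq_zero fun i hi => ?_
    rw [hu1 i, if_neg (Finset.disjoint_left.1 (hdisj l t1 hl) hi)]
  constructor
  · rw [hf, f_formula T hdisj hcover]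
    rw [Finset.sum_eq_single t1 (fun l _ hl => by rw [hA0 l hl]; ring)
        (fun h => absurd (Finset.mem_univ t1) h),
      Finset.sum_eq_single t1 (fun l _ hl => by rw [hA0 l hl]; ring)
        (fun h => absurd (Finset.mem_univ t1) h),
      Finset.sum_eq_single t1 (fun l _ hl => hA0 l hl)
        (fun h => absurd (Finset.mem_univ t1) h),
      hA1]
    ring
  · intro u v hu hv hne
    rw [hf, f_formula T hdisj hcover]
    -- abbreviations
    have hsplitu : ∑ l, Ablk T u l
        = (∑ l ∈ Finset.univ.erase t1, Ablk T u l) + Ablk T u t1 :=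
      (Finset.sum_erase_add _ _ (Finset.mem_univ t1)).symm
    have hsplitv : ∑ l, Ablk T v l
        = (∑ l ∈ Finset.univ.erase t1, Ablk T v l) + Ablk T v t1 :=
      (Finset.sum_erase_add _ _ (Finset.mem_univ t1)).symm
    have hsplitab : ∑ l, Ablk T u l * Ablk T v l
        = (∑ l ∈ Finset.univ.erase t1, Ablk T u l * Ablk T v l)
          + Ablk T u t1 * Ablk T v t1 :=
      (Finset.sum_erase_add _ _ (Finset.mem_univ t1)).symm
    have hsplit1 : ∑ l, ((T l).card : ℚ) * (Ablk T u l + Ablk T v l) / 2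
        = ((∑ l ∈ Finset.univ.erase t1, ((T l).card : ℚ) * Ablk T u l)
          + (∑ l ∈ Finset.univ.erase t1, ((T l).card : ℚ) * Ablk T v l)) / 2
          + ((T t1).card : ℚ) * (Ablk T u t1 + Ablk T v t1) / 2 := by
      rw [← Finset.sum_erase_add Finset.univ
        (fun l => ((T l).card : ℚ) * (Ablk T u l + Ablk T v l) / 2) (Finset.mem_univ t1)]
      congr 1
      rw [Finset.sum_congr rfl (fun l _ => by
        ring : ∀ l ∈ Finset.univ.erase t1, ((T l).card : ℚ) * (Ablk T u l + Ablk T v l) / 2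
          = (((T l).card : ℚ) * Ablk T u l + ((T l).card : ℚ) * Ablk T v l) / 2),
        ← Finset.sum_div, Finset.sum_add_distrib]
    set N : ℚ := ∑ l ∈ Finset.univ.erase t1, ((T l).card : ℚ) ^ 2 with hNdef
    set n1 : ℚ := ((T t1).card : ℚ) with hn1def
    set A : ℚ := Ablk T u t1 with hAdef
    set B : ℚ := Ablk T v t1 with hBdef
    set s : ℚ := ∑ l ∈ Finset.univ.erase t1, Ablk T u l with hsdef
    set t : ℚ := ∑ l ∈ Finset.univ.erase t1, Ablk T v l with htdef
    set Qa : ℚ := ∑ l ∈ Finset.univ.erase t1, ((T l).card : ℚ) * Ablk T u l with hQadef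
    set Qb : ℚ := ∑ l ∈ Finset.univ.erase t1, ((T l).card : ℚ) * Ablk T v l with hQbdef
    set P : ℚ := ∑ l ∈ Finset.univ.erase t1, Ablk T u l * Ablk T v l with hPdef
    -- bounds
    have hcard_le : ∀ l ∈ Finset.univ.erase t1, ((T l).card : ℚ) ≤ n1 := by
      intro l hl
      have h1 : ((T l).card : ℚ)^2 ≤ N :=
        Finset.single_le_sum (f := fun l => ((T l).card : ℚ)^2)
          (fun l _ => sq_nonneg _) hl
      nlinarith [hdom, Nat.cast_nonneg (α := ℚ) (T l).card, hn1]
    have hA0' : 0 ≤ A := ablk_nonneg T u hu t1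
    have hB0' : 0 ≤ B := ablk_nonneg T v hv t1
    have hAle : A ≤ n1 := ablk_le T u hu t1
    have hBle : B ≤ n1 := ablk_le T v hv t1
    have hs0 : 0 ≤ s := Finset.sum_nonneg fun l _ => ablk_nonneg T u hu l
    have ht0 : 0 ≤ t := Finset.sum_nonneg fun l _ => ablk_nonneg T v hv l
    have hQa1 : Qa ≤ N := by
      refine Finset.sum_le_sum fun l _ => ?_
      rw [sq]
      exact mul_le_mul_of_nonneg_left (ablk_le T u hu l) (Nat.cast_nonneg _)
    have hQb1 : Qb ≤ N := by
      refine Finset.sum_le_sum fun l _ => ?_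
      rw [sq]
      exact mul_le_mul_of_nonneg_left (ablk_le T v hv l) (Nat.cast_nonneg _)
    have hQa2 : Qa ≤ n1 * s := by
      rw [hsdef, Finset.mul_sum]
      exact Finset.sum_le_sum fun l hl =>
        mul_le_mul_of_nonneg_right (hcard_le l hl) (ablk_nonneg T u hu l)
    have hQb2 : Qb ≤ n1 * t := by
      rw [htdef, Finset.mul_sum]
      exact Finset.sum_le_sum fun l hl =>
        mul_le_mul_of_nonneg_right (hcard_le l hl) (ablk_nonneg T v hv l)
    have hP : P ≤ s * t := by
      rw [hsdef, Finset.sum_mul]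
      refine Finset.sum_le_sum fun l hl => ?_
      exact mul_le_mul_of_nonneg_left
        (Finset.single_le_sum (fun l' _ => ablk_nonneg T v hv l') hl)
        (ablk_nonneg T u hu l)
    have hN : N < n1^2 := hdom
    -- dichotomy from (u,v) ≠ (u1,u1)
    have hdich : A < n1 ∨ B < n1 ∨ 0 < s ∨ 0 < t := by
      by_contra hc
      push_neg at hc
      obtain ⟨h1, h2, h3, h4⟩ := hc
      apply hne
      have hkey : ∀ (w : Fin m → ℚ), (∀ i, w i = 0 ∨ w i = 1) →
          n1 ≤ Ablk T w t1 → (∑ l ∈ Finset.univ.erase t1, Ablk T w l) ≤ 0 → w = u1 := by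
        intro w hw hw1 hw2
        funext i
        rcases hcover i with ⟨l, hl⟩
        by_cases hlt : l = t1
        · subst hlt
          rw [hu1 i, if_pos hl]
          rcases hw i with h|h
          · exfalso
            have hsum := Finset.sum_erase_add (T l) w hl
            have hle : ∑ x ∈ (T l).erase i, w x ≤ (((T l).erase i).card : ℚ) := by
              calc ∑ x ∈ (T l).erase i, w x ≤ ∑ _x ∈ (T l).erase i, (1:ℚ) :=
                    Finset.sum_le_sum fun x _ => by rcases hw x with h'|h' <;> rw [h'] <;> norm_num
                _ = (((T l).erase i).card : ℚ) := by simp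
            have hclt : (((T l).erase i).card : ℚ) < ((T l).card : ℚ) := by
              exact_mod_cast Nat.cast_lt.2 (Finset.card_erase_lt_of_mem hl)
            have : Ablk T w l < ((T l).card : ℚ) := by
              rw [Ablk, ← hsum, h]
              linarith
            exact absurd hw1 (by rw [hn1def]; linarith)
          · exact h
        · have hnot : i ∉ T t1 := Finset.disjoint_left.1 (hdisj l t1 hlt) hl
          rw [hu1 i, if_neg hnot]
          rcases hw i with h|h
          · exact h
          · exfalso
            have h1' : (1:ℚ) ≤ Ablk T w l := by
              have := Finset.single_le_sum (f := w)
                (fun x _ => by rcases hw x with h'|h' <;> rw [h'] <;> norm_num) hl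
              rw [h] at this
              exact this
            have h2' : Ablk T w l ≤ ∑ l' ∈ Finset.univ.erase t1, Ablk T w l' :=
              Finset.single_le_sum (fun l' _ => ablk_nonneg T w hw l')
                (Finset.mem_erase.2 ⟨hlt, Finset.mem_univ l⟩)
            linarith
      have hu_eq : u = u1 := hkey u hu h1 h3
      have hv_eq : v = u1 := hkey v hv h2 h4
      rw [hu_eq, hv_eq]
    -- main inequality
    obtain ⟨hB_nn, hB_st⟩ := helper_ineq n1 B s Qa N hB0' hBle hs0 hQa1 hQa2 hN hn1
    obtain ⟨hA_nn, hA_st⟩ := helper_ineq n1 A t Qb N hA0' hAle ht0 hQb1 hQb2 hN hn1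
    have hstrict : 0 < (n1 - B)*n1 + 2*s*B - Qa ∨ 0 < (n1 - A)*n1 + 2*t*A - Qb := by
      rcases hdich with h|h|h|h
      · exact Or.inr (hA_st (Or.inr h))
      · exact Or.inl (hB_st (Or.inr h))
      · exact Or.inl (hB_st (Or.inl h))
      · exact Or.inr (hA_st (Or.inl h))
    rw [hsplit1, hsplitab, hsplitu, hsplitv]
    have hfinal : (Qa + Qb) / 2 + n1 * (A + B) / 2 + (P + A * B) - (s + A) * (t + B)
        = n1 ^ 2 - (((n1 - B) * n1 + 2 * s * B - Qa) / 2
          + ((n1 - A) * n1 + 2 * t * A - Qb) / 2 + (s * t - P)) := by ring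
    rcases hstrict with h|h <;> linarith [hP, hA_nn, hB_nn, hfinal]
end

section
/- (Mixed-case bound.) Let T_1, …, T_k be pairwise disjoint subsets of {1,…,m} whose union is {1,…,m}, with n_l = |T_l|, and suppose n_l ≤ n_1 for all l. Let A be the m×m binary block-diagonal matrix determined by the T_l. Then for every pair of binary vectors u, v ∈ {0,1}^m such that u_i = 1 for all i ∈ T_1 and v_j = 0 for all j ∈ T_1, the objective satisfies f(u,v) ≤ (1/2) Σ_{l=1}^{k} n_l². -/
/-- Mixed-case bound: If `n_l ≤ n_1` for all `l`, then for every binary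
pair `(u,v)` with `u ≡ 1` on `T_1` and `v ≡ 0` on `T_1`,
`f(u,v) ≤ (1/2) Σ_{l=1}^k n_l²`. -/
theorem stmt_10 (m k : ℕ) (hk : 0 < k) (T : Fin k → Finset (Fin m))
    (hdisj : ∀ l l', l ≠ l' → Disjoint (T l) (T l'))
    (hcover : ∀ i : Fin m, ∃ l, i ∈ T l)
    (t1 : Fin k) (ht1 : t1 = ⟨0, hk⟩)
    (hmax : ∀ l, (T l).card ≤ (T t1).card)
    (u v : Fin m → ℚ)
    (hu : ∀ i, u i = 0 ∨ u i = 1) (hv : ∀ j, v j = 0 ∨ v j = 1)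
    (hu1 : ∀ i ∈ T t1, u i = 1) (hv1 : ∀ j ∈ T t1, v j = 0) :
    ∑ p ∈ (Finset.univ : Finset (Fin m × Fin m)).filter
        (fun p => ∃ l, p.1 ∈ T l ∧ p.2 ∈ T l), (u p.1 + v p.2) / 2
      - ∑ p ∈ (Finset.univ : Finset (Fin m × Fin m)).filter
        (fun p => ¬ ∃ l, p.1 ∈ T l ∧ p.2 ∈ T l), u p.1 * v p.2
      ≤ (1 / 2) * ∑ l : Fin k, ((T l).card : ℚ) ^ 2 := by
  classical
  set a : Fin k → ℚ := fun l => ∑ i ∈ T l, u i with ha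
  set b : Fin k → ℚ := fun l => ∑ j ∈ T l, v j with hb
  set n : Fin k → ℚ := fun l => ((T l).card : ℚ) with hn
  -- sums over univ split into blocks
  have hsum : ∀ g : Fin m → ℚ, ∑ i, g i = ∑ l, ∑ i ∈ T l, g i := by
    intro g
    rw [show (Finset.univ : Finset (Fin m)) = Finset.univ.biUnion T by
      ext i; simpa using hcover i]
    exact Finset.sum_biUnion (fun l _ l' _ h => hdisj l l' h)
  -- the diagonal set of pairs
  have hSeq : (Finset.univ : Finset (Fin m × Fin m)).filter
      (fun p => ∃ l, p.1 ∈ T l ∧ p.2 ∈ T l)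
      = Finset.univ.biUnion (fun l => T l ×ˢ T l) := by
    ext p; simp [Finset.mem_product]
  have hprodDisj : ∀ l ∈ (Finset.univ : Finset (Fin k)), ∀ l' ∈ Finset.univ,
      l ≠ l' → Disjoint (T l ×ˢ T l) (T l' ×ˢ T l') := by
    intro l _ l' _ h
    exact Finset.disjoint_product.mpr (Or.inl (hdisj l l' h))
  have hpairsum : ∀ F : Fin m × Fin m → ℚ,
      ∑ p ∈ (Finset.univ : Finset (Fin m × Fin m)).filter
        (fun p => ∃ l, p.1 ∈ T l ∧ p.2 ∈ T l), F p
      = ∑ l, ∑ p ∈ T l ×ˢ T l, F p := by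
    intro F; rw [hSeq]; exact Finset.sum_biUnion hprodDisj
  -- first sum
  have h1 : ∑ p ∈ (Finset.univ : Finset (Fin m × Fin m)).filter
        (fun p => ∃ l, p.1 ∈ T l ∧ p.2 ∈ T l), (u p.1 + v p.2) / 2
      = ∑ l, (n l * a l + n l * b l) / 2 := by
    rw [hpairsum]
    refine Finset.sum_congr rfl fun l _ => ?_
    rw [Finset.sum_product]
    simp only [ha, hb, hn, add_div, Finset.sum_add_distrib, Finset.sum_const,
      nsmul_eq_mul, Finset.sum_div, Finset.mul_sum]
    congr 1 <;> exact Finset.sum_congr rfl fun i _ => by ring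
  -- diagonal sum of products
  have hdiag : ∑ p ∈ (Finset.univ : Finset (Fin m × Fin m)).filter
        (fun p => ∃ l, p.1 ∈ T l ∧ p.2 ∈ T l), u p.1 * v p.2
      = ∑ l, a l * b l := by
    rw [hpairsum]
    refine Finset.sum_congr rfl fun l _ => ?_
    rw [Finset.sum_product, ha, hb]
    simp only [← Finset.mul_sum]
    rw [← Finset.sum_mul]
  -- total sum of products
  have htot : ∑ p : Fin m × Fin m, u p.1 * v p.2 = (∑ l, a l) * (∑ l, b l) := by
    rw [Fintype.sum_prod_type]
    rw [← Finset.sum_mul_sum, ← hsum u, ← hsum v]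
  -- second sum
  have h2 : ∑ p ∈ (Finset.univ : Finset (Fin m × Fin m)).filter
        (fun p => ¬ ∃ l, p.1 ∈ T l ∧ p.2 ∈ T l), u p.1 * v p.2
      = (∑ l, a l) * (∑ l, b l) - ∑ l, a l * b l := by
    have := Finset.sum_filter_add_sum_filter_not (Finset.univ : Finset (Fin m × Fin m))
      (fun p => ∃ l, p.1 ∈ T l ∧ p.2 ∈ T l) (fun p => u p.1 * v p.2)
    rw [hdiag] at this
    rw [← htot]
    linarith [this]
  -- basic bounds
  have hann : ∀ l, 0 ≤ a l := fun l =>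
    Finset.sum_nonneg fun i _ => by rcases hu i with h | h <;> simp [h]
  have hbnn : ∀ l, 0 ≤ b l := fun l =>
    Finset.sum_nonneg fun i _ => by rcases hv i with h | h <;> simp [h]
  have hale : ∀ l, a l ≤ n l := by
    intro l
    calc a l ≤ ∑ _i ∈ T l, (1:ℚ) :=
          Finset.sum_le_sum fun i _ => by rcases hu i with h | h <;> simp [h]
      _ = n l := by simp [hn]
  have hble : ∀ l, b l ≤ n l := by
    intro l
    calc b l ≤ ∑ _i ∈ T l, (1:ℚ) :=
          Finset.sum_le_sum fun i _ => by rcases hv i with h | h <;> simp [h]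
      _ = n l := by simp [hn]
  have hat1 : a t1 = n t1 := by
    have e : ∑ i ∈ T t1, u i = ∑ _i ∈ T t1, (1:ℚ) := Finset.sum_congr rfl hu1
    simp only [ha, hn]; rw [e]; simp
  have hbt1 : b t1 = 0 := by
    have e : ∑ j ∈ T t1, v j = ∑ _j ∈ T t1, (0:ℚ) := Finset.sum_congr rfl hv1
    simp only [hb]; rw [e]; simp
  have hnle : ∀ l, n l ≤ n t1 := fun l => by
    simp only [hn]; exact_mod_cast hmax l
  have hnnn : ∀ l, (0:ℚ) ≤ n l := fun l => by simp [hn]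
  -- key product bound
  have hBnn : 0 ≤ ∑ l, b l := Finset.sum_nonneg fun l _ => hbnn l
  have hab : ∑ l, a l * b l ≤ (∑ l ∈ Finset.univ.erase t1, a l) * (∑ l, b l) := by
    have e : ∑ l, a l * b l = ∑ l ∈ Finset.univ.erase t1, a l * b l := by
      rw [← Finset.sum_erase_add _ _ (Finset.mem_univ t1), hbt1]
      simp
    rw [e, Finset.sum_mul]
    refine Finset.sum_le_sum fun l _ => ?_
    exact mul_le_mul_of_nonneg_left
      (Finset.single_le_sum (fun l _ => hbnn l) (Finset.mem_univ l)) (hann l)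
  have hAsplit : ∑ l, a l = (∑ l ∈ Finset.univ.erase t1, a l) + n t1 := by
    rw [← Finset.sum_erase_add _ _ (Finset.mem_univ t1), hat1]
  -- termwise final bound
  have key : ∑ l, ((n l * a l + n l * b l) / 2 - n t1 * b l)
      ≤ ∑ l, (1/2) * n l ^ 2 := by
    refine Finset.sum_le_sum fun l _ => ?_
    nlinarith [hale l, hbnn l, hnle l, hnnn l, hann l, hble l]
  have e1 : ∑ l, ((n l * a l + n l * b l) / 2 - n t1 * b l)
      = (∑ l, (n l * a l + n l * b l) / 2) - n t1 * ∑ l, b l := by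
    rw [Finset.sum_sub_distrib, ← Finset.mul_sum]
  have e2 : ∑ l, (1/2 : ℚ) * n l ^ 2 = (1/2) * ∑ l, n l ^ 2 := by
    rw [Finset.mul_sum]
  rw [h1, h2]
  rw [e1, e2] at key
  nlinarith [mul_le_mul_of_nonneg_right (le_of_eq hAsplit.symm) hBnn, hab, key,
    mul_nonneg (hnnn t1) hBnn]
end

section
/- (Rectangular block model with zero columns: induction step of tile recovery.) Let T_1, …, T_k (k ≥ 1) be pairwise disjoint subsets of {1,…,m} whose union is {1,…,m}, and let S_1, …, S_k be pairwise disjoint subsets of {1,…,n} (whose union may be a proper subset of {1,…,n}), with |T_l| = |S_l| = n_l for each l. Let A be the m×n binary matrix with A_ij = 1 if there exists l with i ∈ T_l and j ∈ S_l, and A_ij = 0 otherwise (so columns outside ∪_l S_l are identically zero). Suppose n_1 ≥ 1 and n_1² > Σ_{l=2}^{k} n_l². Then the objective f(u,v) = Σ_{(i,j): A_ij=1} (u_i+v_j)/2 − Σ_{(i,j): A_ij=0} u_i v_j over binary u ∈ {0,1}^m, v ∈ {0,1}^n attains its maximum value n_1², uniquely at u equal to the indicator vector of T_1 and v equal to the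 indicator vector of S_1. -/
set_option maxHeartbeats 1000000

lemma core_bound {k : ℕ} (t1 : Fin k) (nl X Y : Fin k → ℚ) (N : ℚ)
    (hNt : nl t1 = N) (hNpos : 0 < N)
    (hX0 : ∀ l, 0 ≤ X l) (hXle : ∀ l, X l ≤ nl l)
    (hY0 : ∀ l, 0 ≤ Y l) (hYle : ∀ l, Y l ≤ nl l)
    (hM : ∑ l ∈ Finset.univ.erase t1, (nl l)^2 < N^2)
    (hnlle : ∀ l ∈ Finset.univ.erase t1, nl l ≤ N)
    (U V : ℚ) (hU : U = ∑ l, X l) (hV : ∑ l, Y l ≤ V)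
    (F : ℚ) (hF : 2*F = (∑ l, (nl l * (X l + Y l) + 2*(X l * Y l))) - 2*U*V) :
    F ≤ N^2 ∧ (F = N^2 → (X t1 = N ∧ Y t1 = N ∧ U = N ∧ V = N)) := by
  classical
  set E := Finset.univ.erase t1 with hE
  set a := X t1 with hadef
  set b := Y t1 with hbdef
  set X' := ∑ l ∈ E, X l with hX'
  set Y' := ∑ l ∈ E, Y l with hY'
  set P := ∑ l ∈ E, X l * Y l with hP
  set SnX := ∑ l ∈ E, nl l * X l with hSnX
  set SnY := ∑ l ∈ E, nl l * Y l with hSnY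
  set M := ∑ l ∈ E, (nl l)^2 with hMdef
  have ht1mem : t1 ∈ (Finset.univ : Finset (Fin k)) := Finset.mem_univ t1
  have hsplit : ∀ (g : Fin k → ℚ), ∑ l, g l = g t1 + ∑ l ∈ E, g l := by
    intro g
    rw [hE, ← Finset.add_sum_erase _ g ht1mem]
  have hF' : 2*F = N*(a+b) + 2*(a*b) + (SnX + SnY + 2*P) - 2*U*V := by
    have hs := hsplit (fun l => nl l * (X l + Y l) + 2*(X l * Y l))
    have h : ∑ l ∈ E, (nl l * (X l + Y l) + 2*(X l * Y l)) = SnX + SnY + 2*P := by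
      rw [hSnX, hSnY, hP, Finset.mul_sum, ← Finset.sum_add_distrib,
        ← Finset.sum_add_distrib]
      exact Finset.sum_congr rfl fun l _ => by ring
    rw [hF, hs, h]
    rw [hNt]
    try ring
  have hU' : U = a + X' := by rw [hU, hsplit X]
  have hVge : b + Y' ≤ V := by
    have h := hsplit Y
    rw [← hY', ← hbdef] at h
    linarith [hV]
  have hU0 : 0 ≤ U := by
    rw [hU]; exact Finset.sum_nonneg fun l _ => hX0 l
  have haN : a ≤ N := by rw [← hNt]; exact hXle t1
  have hbN : b ≤ N := by rw [← hNt]; exact hYle t1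
  have ha0 : 0 ≤ a := hX0 t1
  have hb0 : 0 ≤ b := hY0 t1
  have hX'0 : 0 ≤ X' := Finset.sum_nonneg fun l _ => hX0 l
  have hY'0 : 0 ≤ Y' := Finset.sum_nonneg fun l _ => hY0 l
  -- slack s1
  have hs1' : (a+X')*(b+Y') ≤ U*V := by
    rw [← hU']
    exact mul_le_mul_of_nonneg_left hVge hU0
  have hs1 : 0 ≤ 2*N*(U*V - (a+X')*(b+Y')) := by
    have h := mul_nonneg (by linarith : (0:ℚ) ≤ 2*N) (sub_nonneg.2 hs1')
    linarith
  -- slack s2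
  have hs2' : P ≤ X'*Y' := by
    rw [hP, hX', Finset.sum_mul]
    refine Finset.sum_le_sum fun l hl => ?_
    refine mul_le_mul_of_nonneg_left ?_ (hX0 l)
    exact Finset.single_le_sum (fun l' _ => hY0 l') hl
  have hs2 : 0 ≤ 2*N*(X'*Y' - P) := by
    have h := mul_nonneg (by linarith : (0:ℚ) ≤ 2*N) (sub_nonneg.2 hs2')
    linarith
  -- per-l slack
  have hs3each : ∀ l ∈ E, 0 ≤ (nl l)^2*(2*N-a-b) - N*(X l*(nl l-2*b) + Y l*(nl l-2*a)) := by
    intro l hl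
    have h1 : X l ≤ nl l := hXle l
    have h2 : Y l ≤ nl l := hYle l
    have h3 : nl l ≤ N := hnlle l hl
    have h4 : 0 ≤ X l := hX0 l
    have h5 : 0 ≤ Y l := hY0 l
    have h6 : 0 ≤ nl l := le_trans h4 h1
    have key : (nl l)^2*(2*N-a-b) - N*(X l*(nl l-2*b) + Y l*(nl l-2*a))
        = nl l*(nl l - X l)*(N-b) + b*(X l)*(2*N-nl l)
          + nl l*(nl l - Y l)*(N-a) + a*(Y l)*(2*N-nl l) := by ring
    rw [key]
    have c1 : 0 ≤ nl l*(nl l - X l)*(N-b) :=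
      mul_nonneg (mul_nonneg h6 (by linarith)) (by linarith)
    have c2 : 0 ≤ b*(X l)*(2*N-nl l) :=
      mul_nonneg (mul_nonneg hb0 h4) (by linarith)
    have c3 : 0 ≤ nl l*(nl l - Y l)*(N-a) :=
      mul_nonneg (mul_nonneg h6 (by linarith)) (by linarith)
    have c4 : 0 ≤ a*(Y l)*(2*N-nl l) :=
      mul_nonneg (mul_nonneg ha0 h5) (by linarith)
    linarith
  have hs3 : 0 ≤ ∑ l ∈ E, ((nl l)^2*(2*N-a-b) - N*(X l*(nl l-2*b) + Y l*(nl l-2*a))) :=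
    Finset.sum_nonneg hs3each
  have hs3eq : ∑ l ∈ E, ((nl l)^2*(2*N-a-b) - N*(X l*(nl l-2*b) + Y l*(nl l-2*a)))
      = M*(2*N-a-b) - (N*SnX - 2*N*b*X' + N*SnY - 2*N*a*Y') := by
    rw [Finset.sum_sub_distrib]
    congr 1
    · rw [hMdef, Finset.sum_mul]
    · rw [hSnX, hSnY, hX', hY', Finset.mul_sum, Finset.mul_sum, Finset.mul_sum,
        Finset.mul_sum, ← Finset.sum_sub_distrib, ← Finset.sum_add_distrib,
        ← Finset.sum_sub_distrib]
      exact Finset.sum_congr rfl fun l _ => by ring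
  -- slack s4
  have hs4 : 0 ≤ (2*N-a-b)*(N^2-M) := by
    have hMlt : M < N^2 := hM
    have h1 : 0 ≤ 2*N-a-b := by linarith
    nlinarith
  -- grand identity
  have hid : 2*N*F + 2*N*(U*V - (a+X')*(b+Y')) + 2*N*(X'*Y' - P)
      + (∑ l ∈ E, ((nl l)^2*(2*N-a-b) - N*(X l*(nl l-2*b) + Y l*(nl l-2*a))))
      + (2*N-a-b)*(N^2-M) = 2*N^3 := by
    rw [hs3eq]
    linear_combination N * hF'
  have hMlt : M < N^2 := hM
  constructor
  · have hb1 : 2*N*F ≤ 2*N*N^2 := by linarith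
    exact le_of_mul_le_mul_left hb1 (by linarith)
  · intro hFeq
    rw [hFeq] at hid
    have hz1 : 2*N*(U*V - (a+X')*(b+Y')) = 0 := by linarith
    have hz4 : (2*N-a-b)*(N^2-M) = 0 := by linarith
    have hab : a + b = 2*N := by
      rcases mul_eq_zero.1 hz4 with h | h
      · linarith
      · linarith
    have haa : a = N := by linarith
    have hbb : b = N := by linarith
    have hz3 : (∑ l ∈ E, ((nl l)^2*(2*N-a-b) - N*(X l*(nl l-2*b) + Y l*(nl l-2*a)))) = 0 := by
      linarith
    have heach := (Finset.sum_eq_zero_iff_of_nonneg hs3each).1 hz3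
    have hXYzero : ∀ l ∈ E, X l = 0 ∧ Y l = 0 := by
      intro l hl
      have h := heach l hl
      rw [haa, hbb] at h
      have h3 : nl l ≤ N := hnlle l hl
      have h4 : 0 ≤ X l := hX0 l
      have h5 : 0 ≤ Y l := hY0 l
      have e : N*(X l)*(2*N - nl l) + N*(Y l)*(2*N - nl l) = 0 := by
        linear_combination h
      have hpos : 0 < 2*N - nl l := by linarith
      have cX : 0 ≤ N*(X l)*(2*N - nl l) :=
        mul_nonneg (mul_nonneg hNpos.le h4) hpos.le
      have cY : 0 ≤ N*(Y l)*(2*N - nl l) :=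
        mul_nonneg (mul_nonneg hNpos.le h5) hpos.le
      have eX : N*(X l)*(2*N - nl l) = 0 := by linarith
      have eY : N*(Y l)*(2*N - nl l) = 0 := by linarith
      constructor
      · rcases mul_eq_zero.1 eX with h' | h'
        · rcases mul_eq_zero.1 h' with h'' | h''
          · exact absurd h'' (ne_of_gt hNpos)
          · exact h''
        · exact absurd h' (ne_of_gt hpos)
      · rcases mul_eq_zero.1 eY with h' | h'
        · rcases mul_eq_zero.1 h' with h'' | h''
          · exact absurd h'' (ne_of_gt hNpos)
          · exact h''
        · exact absurd h' (ne_of_gt hpos)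
    have hX'z : X' = 0 := by
      rw [hX']; exact Finset.sum_eq_zero fun l hl => (hXYzero l hl).1
    have hY'z : Y' = 0 := by
      rw [hY']; exact Finset.sum_eq_zero fun l hl => (hXYzero l hl).2
    have hUN : U = N := by rw [hU', haa, hX'z]; ring
    have hVN : V = N := by
      have h : U*V = (a+X')*(b+Y') := by
        rcases mul_eq_zero.1 hz1 with h' | h'
        · exfalso; linarith
        · linarith
      rw [hUN, haa, hbb, hX'z, hY'z] at h
      have h2 : N*V = N*N := by linarith
      have h3 := mul_left_cancel₀ (ne_of_gt hNpos) h2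
      linarith
    exact ⟨haa, hbb, hUN, hVN⟩


lemma sum_formula_aux (m n k : ℕ)
    (T : Fin k → Finset (Fin m)) (S : Fin k → Finset (Fin n))
    (hTdisj : ∀ l l', l ≠ l' → Disjoint (T l) (T l'))
    (hcard : ∀ l, (T l).card = (S l).card)
    (u : Fin m → ℚ) (v : Fin n → ℚ) :
    (∑ p ∈ (Finset.univ : Finset (Fin m × Fin n)).filter
          (fun p => ∃ l, p.1 ∈ T l ∧ p.2 ∈ S l), (u p.1 + v p.2) / 2
        - ∑ p ∈ (Finset.univ : Finset (Fin m × Fin n)).filter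
          (fun p => ¬ ∃ l, p.1 ∈ T l ∧ p.2 ∈ S l), u p.1 * v p.2)
    = (∑ l, (((T l).card : ℚ) * ((∑ i ∈ T l, u i) + ∑ j ∈ S l, v j) / 2
          + (∑ i ∈ T l, u i) * (∑ j ∈ S l, v j)))
      - (∑ i, u i) * (∑ j, v j) := by
  classical
  have hunion : (Finset.univ : Finset (Fin m × Fin n)).filter
      (fun p => ∃ l, p.1 ∈ T l ∧ p.2 ∈ S l)
      = Finset.univ.biUnion (fun l => T l ×ˢ S l) := by
    ext p
    simp [Finset.mem_product]
  have hpd : (↑(Finset.univ : Finset (Fin k)) : Set (Fin k)).PairwiseDisjoint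
      (fun l => T l ×ˢ S l) := by
    intro l _ l' _ hll'
    refine Finset.disjoint_left.2 ?_
    intro p hp hp'
    simp only [Finset.mem_product] at hp hp'
    exact (Finset.disjoint_left.1 (hTdisj l l' hll')) hp.1 hp'.1
  have hsum1 : ∀ (g : Fin m × Fin n → ℚ),
      ∑ p ∈ (Finset.univ : Finset (Fin m × Fin n)).filter
          (fun p => ∃ l, p.1 ∈ T l ∧ p.2 ∈ S l), g p
        = ∑ l, ∑ p ∈ T l ×ˢ S l, g p := by
    intro g
    rw [hunion, Finset.sum_biUnion hpd]
  have htot : (∑ p ∈ (Finset.univ : Finset (Fin m × Fin n)).filter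
          (fun p => ∃ l, p.1 ∈ T l ∧ p.2 ∈ S l), u p.1 * v p.2)
        + ∑ p ∈ (Finset.univ : Finset (Fin m × Fin n)).filter
          (fun p => ¬ ∃ l, p.1 ∈ T l ∧ p.2 ∈ S l), u p.1 * v p.2
      = (∑ i, u i) * (∑ j, v j) := by
    rw [Finset.sum_filter_add_sum_filter_not]
    rw [Fintype.sum_prod_type]
    rw [Finset.sum_mul_sum]
  have h1 : ∑ p ∈ (Finset.univ : Finset (Fin m × Fin n)).filter
          (fun p => ∃ l, p.1 ∈ T l ∧ p.2 ∈ S l), (u p.1 + v p.2) / 2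
      = ∑ l, (((T l).card : ℚ) * ((∑ i ∈ T l, u i) + ∑ j ∈ S l, v j) / 2) := by
    rw [hsum1]
    refine Finset.sum_congr rfl fun l _ => ?_
    rw [Finset.sum_product]
    have h : ∀ i ∈ T l, ∑ j ∈ S l, (u i + v j) / 2
        = ((S l).card : ℚ) * u i / 2 + (∑ j ∈ S l, v j) / 2 := by
      intro i _
      rw [← Finset.sum_div, Finset.sum_add_distrib, Finset.sum_const, nsmul_eq_mul]
      ring
    rw [Finset.sum_congr rfl h, Finset.sum_add_distrib, Finset.sum_const,
      nsmul_eq_mul, ← Finset.sum_div, ← Finset.mul_sum, hcard l]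
    ring
  have h2 : ∑ p ∈ (Finset.univ : Finset (Fin m × Fin n)).filter
          (fun p => ∃ l, p.1 ∈ T l ∧ p.2 ∈ S l), u p.1 * v p.2
      = ∑ l, (∑ i ∈ T l, u i) * (∑ j ∈ S l, v j) := by
    rw [hsum1]
    refine Finset.sum_congr rfl fun l _ => ?_
    rw [Finset.sum_product, Finset.sum_mul_sum]
  rw [h1, Finset.sum_add_distrib]
  linarith [htot, h2]

lemma all_one_aux {α : Type*} (s : Finset α) (w : α → ℚ)
    (hle : ∀ i ∈ s, w i ≤ 1) (hsum : ∑ i ∈ s, w i = s.card) :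
    ∀ i ∈ s, w i = 1 := by
  have h : ∑ i ∈ s, (1 - w i) = 0 := by
    rw [Finset.sum_sub_distrib, Finset.sum_const, nsmul_eq_mul, mul_one, hsum]
    ring
  intro i hi
  have := (Finset.sum_eq_zero_iff_of_nonneg
    (fun j hj => by linarith [hle j hj])).1 h i hi
  linarith



/-- Rectangular block model with zero columns; induction step of tile
recovery: With row tiles `T_l` partitioning `{1,…,m}`, column tiles `S_l` pairwise
disjoint in `{1,…,n}` (possibly not covering), `|T_l| = |S_l|`, and `A_ij = 1` iff
`(i,j) ∈ T_l × S_l` for some `l`, if `n_1 ≥ 1` and `n_1² > Σ_{l=2}^k n_l²` then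
`f` attains its maximum value `n_1²` uniquely at the indicator pair of `(T_1, S_1)`. -/
theorem stmt_12 (m n k : ℕ) (hk : 1 ≤ k)
    (T : Fin k → Finset (Fin m)) (S : Fin k → Finset (Fin n))
    (hTdisj : ∀ l l', l ≠ l' → Disjoint (T l) (T l'))
    (hSdisj : ∀ l l', l ≠ l' → Disjoint (S l) (S l'))
    (hTcover : ∀ i : Fin m, ∃ l, i ∈ T l)
    (hcard : ∀ l, (T l).card = (S l).card)
    (f : (Fin m → ℚ) → (Fin n → ℚ) → ℚ)
    (hf : ∀ u v, f u v =
      ∑ p ∈ (Finset.univ : Finset (Fin m × Fin n)).filter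
          (fun p => ∃ l, p.1 ∈ T l ∧ p.2 ∈ S l), (u p.1 + v p.2) / 2
        - ∑ p ∈ (Finset.univ : Finset (Fin m × Fin n)).filter
          (fun p => ¬ ∃ l, p.1 ∈ T l ∧ p.2 ∈ S l), u p.1 * v p.2)
    (t1 : Fin k) (ht1 : t1 = ⟨0, by omega⟩)
    (hn1 : 1 ≤ (T t1).card)
    (hdom : ((T t1).card : ℚ) ^ 2
      > ∑ l ∈ Finset.univ.erase t1, ((T l).card : ℚ) ^ 2)
    (u1 : Fin m → ℚ) (hu1 : ∀ i, u1 i = if i ∈ T t1 then 1 else 0)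
    (v1 : Fin n → ℚ) (hv1 : ∀ j, v1 j = if j ∈ S t1 then 1 else 0) :
    f u1 v1 = ((T t1).card : ℚ) ^ 2
      ∧ ∀ (u : Fin m → ℚ) (v : Fin n → ℚ),
          (∀ i, u i = 0 ∨ u i = 1) → (∀ j, v j = 0 ∨ v j = 1) →
          (u, v) ≠ (u1, v1) → f u v < ((T t1).card : ℚ) ^ 2 := by
  classical
  set N : ℚ := ((T t1).card : ℚ) with hN
  have hNpos : 0 < N := by
    rw [hN]
    exact_mod_cast Nat.lt_of_lt_of_le Nat.zero_lt_one hn1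
  have hform : ∀ (u : Fin m → ℚ) (v : Fin n → ℚ), f u v
      = (∑ l, (((T l).card : ℚ) * ((∑ i ∈ T l, u i) + ∑ j ∈ S l, v j) / 2
          + (∑ i ∈ T l, u i) * (∑ j ∈ S l, v j)))
        - (∑ i, u i) * (∑ j, v j) := by
    intro u v
    rw [hf]
    exact sum_formula_aux m n k T S hTdisj hcard u v
  have hnlle : ∀ l ∈ Finset.univ.erase t1, ((T l).card : ℚ) ≤ N := by
    intro l hl
    have h1 : ((T l).card : ℚ)^2 ≤ ∑ l' ∈ Finset.univ.erase t1, ((T l').card : ℚ)^2 :=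
      Finset.single_le_sum (f := fun l' => ((T l').card : ℚ)^2)
        (fun l' _ => sq_nonneg _) hl
    have h2 : (0:ℚ) ≤ ((T l).card : ℚ) := Nat.cast_nonneg _
    nlinarith [hdom]
  -- universe is a partition by T
  have hTuniv : (Finset.univ : Finset (Fin m)) = Finset.univ.biUnion T := by
    ext i
    simp only [Finset.mem_univ, Finset.mem_biUnion, true_iff]
    obtain ⟨l, hl⟩ := hTcover i
    exact ⟨l, trivial, hl⟩
  have hTpd : (↑(Finset.univ : Finset (Fin k)) : Set (Fin k)).PairwiseDisjoint T :=
    fun l _ l' _ hll' => hTdisj l l' hll'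
  have hSpd : (↑(Finset.univ : Finset (Fin k)) : Set (Fin k)).PairwiseDisjoint S :=
    fun l _ l' _ hll' => hSdisj l l' hll'
  -- main bound for binary vectors
  have key : ∀ (u : Fin m → ℚ) (v : Fin n → ℚ),
      (∀ i, u i = 0 ∨ u i = 1) → (∀ j, v j = 0 ∨ v j = 1) →
      f u v ≤ N^2 ∧ (f u v = N^2 → u = u1 ∧ v = v1) := by
    intro u v hu hv
    have hu0 : ∀ i, 0 ≤ u i := fun i => by rcases hu i with h | h <;> rw [h] <;> norm_num
    have hu1' : ∀ i, u i ≤ 1 := fun i => by rcases hu i with h | h <;> rw [h] <;> norm_num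
    have hv0 : ∀ j, 0 ≤ v j := fun j => by rcases hv j with h | h <;> rw [h] <;> norm_num
    have hv1' : ∀ j, v j ≤ 1 := fun j => by rcases hv j with h | h <;> rw [h] <;> norm_num
    set X : Fin k → ℚ := fun l => ∑ i ∈ T l, u i with hXdef
    set Y : Fin k → ℚ := fun l => ∑ j ∈ S l, v j with hYdef
    have hX0 : ∀ l, 0 ≤ X l := fun l => Finset.sum_nonneg fun i _ => hu0 i
    have hY0 : ∀ l, 0 ≤ Y l := fun l => Finset.sum_nonneg fun j _ => hv0 j
    have hXle : ∀ l, X l ≤ ((T l).card : ℚ) := by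
      intro l
      calc X l ≤ ∑ _i ∈ T l, (1:ℚ) := Finset.sum_le_sum fun i _ => hu1' i
      _ = ((T l).card : ℚ) := by rw [Finset.sum_const, nsmul_eq_mul, mul_one]
    have hYle : ∀ l, Y l ≤ ((T l).card : ℚ) := by
      intro l
      calc Y l ≤ ∑ _j ∈ S l, (1:ℚ) := Finset.sum_le_sum fun j _ => hv1' j
      _ = ((S l).card : ℚ) := by rw [Finset.sum_const, nsmul_eq_mul, mul_one]
      _ = ((T l).card : ℚ) := by rw [hcard l]
    have hU : (∑ i, u i) = ∑ l, X l := by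
      conv_lhs => rw [show (Finset.univ : Finset (Fin m)) = Finset.univ.biUnion T from hTuniv]
      rw [Finset.sum_biUnion hTpd]
    have hV : (∑ l, Y l) ≤ ∑ j, v j := by
      rw [show (∑ l, Y l) = ∑ j ∈ Finset.univ.biUnion S, v j from
        (Finset.sum_biUnion hSpd).symm]
      exact Finset.sum_le_sum_of_subset_of_nonneg (Finset.subset_univ _)
        (fun j _ _ => hv0 j)
    have hF : 2 * f u v = (∑ l, (((T l).card : ℚ) * (X l + Y l) + 2*(X l * Y l)))
        - 2*(∑ i, u i)*(∑ j, v j) := by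
      have h := hform u v
      have h2 : (∑ l, (((T l).card : ℚ) * (X l + Y l) + 2*(X l * Y l)))
          = 2 * ∑ l, (((T l).card : ℚ) * (X l + Y l) / 2 + X l * Y l) := by
        rw [Finset.mul_sum]
        exact Finset.sum_congr rfl fun l _ => by ring
      rw [h2]
      linarith [h]
    have hcore := core_bound t1 (fun l => ((T l).card : ℚ)) X Y N rfl hNpos
      hX0 hXle hY0 hYle (by simpa using hdom) hnlle
      (∑ i, u i) (∑ j, v j) hU hV (f u v) hF
    refine ⟨hcore.1, fun hfeq => ?_⟩
    obtain ⟨hXt1, hYt1, hUN, hVN⟩ := hcore.2 hfeq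
    -- recover u = u1
    have hcardT : ((T t1).card : ℚ) = N := rfl
    have huT : ∀ i ∈ T t1, u i = 1 := by
      apply all_one_aux (T t1) u (fun i _ => hu1' i)
      exact hXt1
    have huO : ∀ i ∈ (Finset.univ : Finset (Fin m)) \ T t1, u i = 0 := by
      have hsd : ∑ i ∈ (Finset.univ : Finset (Fin m)) \ T t1, u i = 0 := by
        have := Finset.sum_sdiff (Finset.subset_univ (T t1)) (f := u)
        have hXt1' : ∑ i ∈ T t1, u i = N := hXt1
        rw [hXt1', hUN] at this
        linarith
      exact fun i hi => (Finset.sum_eq_zero_iff_of_nonneg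
        (fun i _ => hu0 i)).1 hsd i hi
    have hueq : u = u1 := by
      funext i
      rw [hu1 i]
      by_cases hi : i ∈ T t1
      · rw [if_pos hi]; exact huT i hi
      · rw [if_neg hi]
        exact huO i (Finset.mem_sdiff.2 ⟨Finset.mem_univ i, hi⟩)
    -- recover v = v1
    have hvS : ∀ j ∈ S t1, v j = 1 := by
      apply all_one_aux (S t1) v (fun j _ => hv1' j)
      have hc : ((S t1).card : ℚ) = N := by rw [hN]; exact_mod_cast (hcard t1).symm
      rw [hc]
      exact hYt1
    have hvO : ∀ j ∈ (Finset.univ : Finset (Fin n)) \ S t1, v j = 0 := by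
      have hsd : ∑ j ∈ (Finset.univ : Finset (Fin n)) \ S t1, v j = 0 := by
        have := Finset.sum_sdiff (Finset.subset_univ (S t1)) (f := v)
        have hYt1' : ∑ j ∈ S t1, v j = N := hYt1
        rw [hYt1', hVN] at this
        linarith
      exact fun j hj => (Finset.sum_eq_zero_iff_of_nonneg
        (fun j _ => hv0 j)).1 hsd j hj
    have hveq : v = v1 := by
      funext j
      rw [hv1 j]
      by_cases hj : j ∈ S t1
      · rw [if_pos hj]; exact hvS j hj
      · rw [if_neg hj]
        exact hvO j (Finset.mem_sdiff.2 ⟨Finset.mem_univ j, hj⟩)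
    exact ⟨hueq, hveq⟩
  -- value at (u1, v1)
  have hval : f u1 v1 = N^2 := by
    have hX1 : ∀ l, (∑ i ∈ T l, u1 i) = if l = t1 then N else 0 := by
      intro l
      by_cases hl : l = t1
      · rw [if_pos hl, hl]
        rw [Finset.sum_congr rfl (fun i hi => by rw [hu1 i, if_pos hi])]
        rw [Finset.sum_const, nsmul_eq_mul, mul_one, hN]
      · rw [if_neg hl]
        refine Finset.sum_eq_zero fun i hi => ?_
        rw [hu1 i, if_neg ?_]
        exact fun hmem => (Finset.disjoint_left.1 (hTdisj l t1 hl)) hi hmem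
    have hY1 : ∀ l, (∑ j ∈ S l, v1 j) = if l = t1 then N else 0 := by
      intro l
      by_cases hl : l = t1
      · rw [if_pos hl, hl]
        rw [Finset.sum_congr rfl (fun j hj => by rw [hv1 j, if_pos hj])]
        rw [Finset.sum_const, nsmul_eq_mul, mul_one, ← hcard t1, hN]
      · rw [if_neg hl]
        refine Finset.sum_eq_zero fun j hj => ?_
        rw [hv1 j, if_neg ?_]
        exact fun hmem => (Finset.disjoint_left.1 (hSdisj l t1 hl)) hj hmem
    have hUval : (∑ i, u1 i) = N := by
      rw [show (Finset.univ : Finset (Fin m)) = Finset.univ.biUnion T from hTuniv,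
        Finset.sum_biUnion hTpd]
      rw [Finset.sum_eq_single_of_mem t1 (Finset.mem_univ t1)
        (fun l _ hl => by rw [hX1 l, if_neg hl])]
      rw [hX1 t1, if_pos rfl]
    have hVval : (∑ j, v1 j) = N := by
      have h1 : ∑ j ∈ Finset.univ.biUnion S, v1 j = N := by
        rw [Finset.sum_biUnion hSpd]
        rw [Finset.sum_eq_single_of_mem t1 (Finset.mem_univ t1)
          (fun l _ hl => by rw [hY1 l, if_neg hl])]
        rw [hY1 t1, if_pos rfl]
      have h2 : ∑ j ∈ (Finset.univ : Finset (Fin n)) \ Finset.univ.biUnion S, v1 j = 0 := by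
        refine Finset.sum_eq_zero fun j hj => ?_
        rw [Finset.mem_sdiff] at hj
        rw [hv1 j, if_neg ?_]
        intro hmem
        exact hj.2 (Finset.mem_biUnion.2 ⟨t1, Finset.mem_univ t1, hmem⟩)
      have h3 := Finset.sum_sdiff (Finset.subset_univ (Finset.univ.biUnion S)) (f := v1)
      rw [h1, h2] at h3
      linarith
    rw [hform u1 v1, hUval, hVval]
    rw [Finset.sum_eq_single_of_mem t1 (Finset.mem_univ t1)
      (fun l _ hl => by rw [hX1 l, hY1 l, if_neg hl]; ring)]
    rw [hX1 t1, hY1 t1, if_pos rfl]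
    have : ((T t1).card : ℚ) = N := rfl
    rw [this]
    ring
  refine ⟨hval, fun u v hu hv hne => ?_⟩
  rcases (key u v hu hv) with ⟨hle, heq⟩
  rcases lt_or_eq_of_le hle with h | h
  · exact h
  · exfalso
    obtain ⟨h1, h2⟩ := heq h
    exact hne (by rw [h1, h2])
end

section
/- (Optimality of the thresholded alternating-minimization update.) Let A be an m×n matrix with entries in {0,1} and Ω a set of observed index pairs. Define W by W_ij = 2 A_ij − 1 if (i,j) ∈ Ω and W_ij = 0 otherwise. Fix a binary vector v ∈ {0,1}^n and define u* ∈ {0,1}^m by u*_i = 1 if Σ_{j=1}^{n} W_ij v_j > 0 and u*_i = 0 otherwise. Then for every binary vector u ∈ {0,1}^m, Σ_{(i,j)∈Ω} (A_ij − u*_i v_j)² ≤ Σ_{(i,j)∈Ω} (A_ij − u_i v_j)²; that is, u* minimizes the approximation error over all binary u given the fixed v. -/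
/-- Optimality of the thresholded alternating-minimization update:
With `W_ij = 2A_ij − 1` on `Ω` and `0` elsewhere, and a fixed binary `v`, the vector
`u*` with `u*_i = 1` iff `(Wv)_i > 0` minimizes the approximation error
`Σ_{(i,j)∈Ω} (A_ij − u_i v_j)²` over all binary `u`. -/
theorem stmt_17 (m n : ℕ) (A : Fin m → Fin n → ℤ)
    (hA : ∀ i j, A i j = 0 ∨ A i j = 1)
    (Ω : Finset (Fin m × Fin n))
    (W : Fin m → Fin n → ℤ)
    (hW : ∀ i j, W i j = if (i, j) ∈ Ω then 2 * A i j - 1 else 0)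
    (v : Fin n → ℤ) (hv : ∀ j, v j = 0 ∨ v j = 1)
    (ustar : Fin m → ℤ)
    (hustar : ∀ i, ustar i = if 0 < ∑ j : Fin n, W i j * v j then 1 else 0) :
    ∀ (u : Fin m → ℤ), (∀ i, u i = 0 ∨ u i = 1) →
      ∑ p ∈ Ω, (A p.1 p.2 - ustar p.1 * v p.2) ^ 2
        ≤ ∑ p ∈ Ω, (A p.1 p.2 - u p.1 * v p.2) ^ 2 := by
  intro u hu
  have key : ∀ (w : Fin m → ℤ), (∀ i, w i = 0 ∨ w i = 1) →
      ∑ p ∈ Ω, (A p.1 p.2 - w p.1 * v p.2) ^ 2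
        = (∑ p ∈ Ω, A p.1 p.2) - ∑ i : Fin m, w i * ∑ j : Fin n, W i j * v j := by
    intro w hw
    have h1 : ∑ p ∈ Ω, (A p.1 p.2 - w p.1 * v p.2) ^ 2
        = ∑ p ∈ Ω, (A p.1 p.2 - W p.1 p.2 * (w p.1 * v p.2)) := by
      apply Finset.sum_congr rfl
      intro p hp
      have hpm : (p.1, p.2) ∈ Ω := by simpa using hp
      rw [hW p.1 p.2, if_pos hpm]
      rcases hA p.1 p.2 with h | h <;> rcases hw p.1 with h2 | h2 <;>
        rcases hv p.2 with h3 | h3 <;> rw [h, h2, h3] <;> ring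
    rw [h1, Finset.sum_sub_distrib]
    congr 1
    have h2 : ∑ p ∈ Ω, W p.1 p.2 * (w p.1 * v p.2)
        = ∑ p ∈ (Finset.univ : Finset (Fin m × Fin n)), W p.1 p.2 * (w p.1 * v p.2) := by
      apply Finset.sum_subset (Finset.subset_univ Ω)
      intro p _ hp
      have : W p.1 p.2 = 0 := by
        rw [hW p.1 p.2, if_neg (by simpa using hp)]
      rw [this, zero_mul]
    rw [h2, Fintype.sum_prod_type]
    apply Finset.sum_congr rfl
    intro i _
    rw [Finset.mul_sum]
    apply Finset.sum_congr rfl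
    intro j _
    ring
  rw [key ustar (fun i => by rw [hustar i]; split <;> simp),
      key u hu]
  apply sub_le_sub_left
  apply Finset.sum_le_sum
  intro i _
  rw [hustar i]
  set S := ∑ j : Fin n, W i j * v j with hS
  rcases hu i with h | h <;> rw [h] <;> split <;> rename_i hpos <;> simp <;> try linarith
end
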